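/- arXiv:1706.09607 — 8 statements merged into one kernel-verified Lean document; each statement's English description precedes it below -/
import Mathlib

section
/- Suppose A satisfies the RIP of order k+b+1 with constant δ. Let z be a vector supported on a set S with |S| = k+b, let u = z + ŝ e_i and w = s² z − ŝ e_i, where i ∉ S, s² < 1 and |ŝ| = |s|·‖z‖₂. Then ‖Au‖₂² − ‖Aw‖₂² ≥ ‖z‖₂² (1+s²)² ( (1−s²)/(1+s²) − δ ). -/
/-- `A` satisfies the restricted isometry property of order `k` with constant `δ`:
`(1−δ)‖x‖₂² ≤ ‖Ax‖₂² ≤ (1+δ)‖x‖₂²` for all `k`-sparse `x`. -/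
def RIP {m n : ℕ} (A : Matrix (Fin m) (Fin n) ℝ) (k : ℕ) (δ : ℝ) : Prop :=
  ∀ x : Fin n → ℝ, (∃ S : Finset (Fin n), S.card ≤ k ∧ ∀ i ∉ S, x i = 0) →
    (1 - δ) * (∑ i, x i ^ 2) ≤ (∑ i, (A.mulVec x) i ^ 2) ∧
    (∑ i, (A.mulVec x) i ^ 2) ≤ (1 + δ) * (∑ i, x i ^ 2)

open Finset

/-! Both `u` and `w` are supported on `S ∪ {i}`, and since `z` and `e_i` have disjoint supports,
`‖u‖² = (1 + s²)‖z‖²` and `‖w‖² = s²(1 + s²)‖z‖²`. The lower RIP bound for `u` and the upper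
one for `w` then give `‖Au‖² − ‖Aw‖² ≥ (1 + s²)‖z‖² ((1 − δ) − s²(1 + δ))`, which is the claim. -/

section
variable {ι : Type*} [DecidableEq ι]

lemma sum_sq_add_smul_single [Fintype ι] {y : ι → ℝ} {i : ι} (hyi : y i = 0) (d : ℝ) :
    ∑ j, (y + d • Pi.single i 1 : ι → ℝ) j ^ 2 = ∑ j, y j ^ 2 + d ^ 2 := by
  have hsplit : ∀ j,
      (y + d • Pi.single i 1 : ι → ℝ) j ^ 2 = y j ^ 2 + (Pi.single i d : ι → ℝ) j ^ 2 := by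
    intro j
    rcases eq_or_ne j i with rfl | hj
    · simp [hyi]
    · simp [hj]
  have hsingle : ∑ j, (Pi.single i d : ι → ℝ) j ^ 2 = d ^ 2 := by
    rw [Fintype.sum_eq_single i (fun j hj => by simp [hj])]
    simp
  simp only [hsplit, sum_add_distrib, hsingle]

lemma add_smul_single_eq_zero_of_notMem_insert {y : ι → ℝ} {S : Finset ι}
    (hy : ∀ j ∉ S, y j = 0) (i : ι) (d : ℝ) :
    ∀ j ∉ insert i S, (y + d • Pi.single i 1 : ι → ℝ) j = 0 := by
  intro j hj
  rw [mem_insert, not_or] at hj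
  simp [hy j hj.2, hj.1]

end

lemma RIP.bounds_add_smul_single {m n k : ℕ} {A : Matrix (Fin m) (Fin n) ℝ} {δ : ℝ}
    (hA : RIP A (k + 1) δ) {S : Finset (Fin n)} (hS : S.card ≤ k) {y : Fin n → ℝ}
    (hy : ∀ j ∉ S, y j = 0) {i : Fin n} (hi : i ∉ S) (d : ℝ) :
    (1 - δ) * (∑ j, y j ^ 2 + d ^ 2) ≤
        ∑ j, (A.mulVec (y + d • Pi.single i 1 : Fin n → ℝ)) j ^ 2 ∧
      ∑ j, (A.mulVec (y + d • Pi.single i 1 : Fin n → ℝ)) j ^ 2 ≤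
        (1 + δ) * (∑ j, y j ^ 2 + d ^ 2) := by
  rw [← sum_sq_add_smul_single (hy i hi) d]
  exact hA _ ⟨insert i S, (card_insert_le i S).trans (Nat.succ_le_succ hS),
    add_smul_single_eq_zero_of_notMem_insert hy i d⟩

theorem stmt3_general (m n k b : ℕ) (A : Matrix (Fin m) (Fin n) ℝ) (δ : ℝ)
    (hRIP : RIP A (k + b + 1) δ)
    (z : Fin n → ℝ) (S : Finset (Fin n)) (hScard : S.card = k + b)
    (hz : ∀ i ∉ S, z i = 0)
    (i : Fin n) (hi : i ∉ S) (s sh : ℝ)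
    (hsh : |sh| = |s| * Real.sqrt (∑ j, z j ^ 2)) :
    (∑ j, (A.mulVec (z + sh • (Pi.single i 1 : Fin n → ℝ))) j ^ 2) -
      (∑ j, (A.mulVec (s ^ 2 • z - sh • (Pi.single i 1 : Fin n → ℝ))) j ^ 2) ≥
    (∑ j, z j ^ 2) * (1 + s ^ 2) ^ 2 * ((1 - s ^ 2) / (1 + s ^ 2) - δ) := by
  set Z := ∑ j, z j ^ 2
  have hsh2 : sh ^ 2 = s ^ 2 * Z := by
    rw [← sq_abs, hsh, mul_pow, sq_abs, Real.sq_sqrt (by positivity)]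
  have hsz : ∑ j, (s ^ 2 • z) j ^ 2 = s ^ 4 * Z := by
    simp only [Pi.smul_apply, smul_eq_mul, mul_pow, ← mul_sum]
    ring
  have hu := (hRIP.bounds_add_smul_single hScard.le hz hi sh).1
  have hw := (hRIP.bounds_add_smul_single hScard.le (y := s ^ 2 • z)
    (fun j hj => by simp [hz j hj]) hi (-sh)).2
  rw [neg_smul, ← sub_eq_add_neg, neg_sq, hsz] at hw
  have hs1 : (1 + s ^ 2) ≠ 0 := by positivity
  calc Z * (1 + s ^ 2) ^ 2 * ((1 - s ^ 2) / (1 + s ^ 2) - δ)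
      = (1 - δ) * (Z + sh ^ 2) - (1 + δ) * (s ^ 4 * Z + sh ^ 2) := by
        rw [hsh2]; field_simp; ring
    _ ≤ _ := by linarith

/-- Suppose `A` satisfies the RIP of order `k+b+1` with constant `δ`. Let `z` be supported on
`S` with `|S| = k+b`, `u = z + sh e_i`, `w = s² z − sh e_i`, `i ∉ S`, `s² < 1`,
`|sh| = |s|·‖z‖₂`. Then `‖Au‖₂² − ‖Aw‖₂² ≥ ‖z‖₂² (1+s²)² ((1−s²)/(1+s²) − δ)`. -/
theorem stmt3 (m n k b : ℕ) (A : Matrix (Fin m) (Fin n) ℝ) (δ : ℝ)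
    (hRIP : RIP A (k + b + 1) δ)
    (z : Fin n → ℝ) (S : Finset (Fin n)) (hScard : S.card = k + b)
    (hz : ∀ i ∉ S, z i = 0)
    (i : Fin n) (hi : i ∉ S) (s sh : ℝ) (hs : s ^ 2 < 1)
    (hsh : |sh| = |s| * Real.sqrt (∑ j, z j ^ 2)) :
    (∑ j, (A.mulVec (z + sh • (Pi.single i 1 : Fin n → ℝ))) j ^ 2) -
      (∑ j, (A.mulVec (s ^ 2 • z - sh • (Pi.single i 1 : Fin n → ℝ))) j ^ 2) ≥
    (∑ j, z j ^ 2) * (1 + s ^ 2) ^ 2 * ((1 - s ^ 2) / (1 + s ^ 2) - δ) :=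
  stmt3_general m n k b A δ hRIP z S hScard hz i hi s sh hsh
end

section
/- (Main lemma) Let A satisfy the RIP of order k+b+1 with constant δ_{k+b+1}. Let T, Λ be index sets with Λ ⊆ T ∪ T₀, |T ∪ Λ| = k + b, and |T \ Λ| = k − g − t ≥ 1. Let z be the vector supported on T ∪ Λ whose entries satisfy A_Λᵀ A z̃ = 0, where z̃ is the zero-extension of z to ℝⁿ. Then max_{i ∈ T\Λ} |⟨Ae_i, Az̃⟩| − max_{i ∉ T∪Λ} |⟨Ae_i, Az̃⟩| ≥ (1/√(k−g−t)) (1 − √(k−g−t+1) · δ_{k+b+1}) ‖z̃‖₂. -/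
/-!
Write `c = Aᵀ A z` and `s = |T \ Λ|`. Since `c` vanishes on `Λ` and `z` off `T ∪ Λ`,
`‖Az‖² = ⟨z, c⟩` is a sum over `T \ Λ`, so Cauchy–Schwarz gives `‖Az‖² ≤ (max_{T\Λ} |cᵢ|) √s ‖z‖`.
For `j ∉ T ∪ Λ`, both `z` and `y = z ∓ √s ‖z‖ eⱼ` (sign opposite to `cⱼ`) are supported on a set
of size `k + b + 1`, and the RIP gives `⟨Az, Ay⟩ ≥ ⟨z, y⟩ - δ ‖z‖ ‖y‖`, i.e.
`‖Az‖² - √s ‖z‖ |cⱼ| ≥ (1 - √(s+1) δ) ‖z‖²` because `‖y‖ = √(s+1) ‖z‖`.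
Comparing the two bounds and dividing by `√s ‖z‖` gives the claim.
-/

open scoped BigOperators

open Matrix Finset

lemma sum_sq_eq_dotProduct_self {ι R : Type*} [Fintype ι] [Semiring R] (x : ι → R) :
    ∑ i, x i ^ 2 = x ⬝ᵥ x := by
  simp only [dotProduct, sq]

lemma dotProduct_self_nonneg {ι R : Type*} [Fintype ι] [Ring R] [LinearOrder R]
    [IsStrictOrderedRing R] (x : ι → R) : 0 ≤ x ⬝ᵥ x :=
  sum_nonneg fun i _ => mul_self_nonneg (x i)

lemma dotProduct_le_mul_sqrt_card_mul_sqrt {ι : Type*} [Fintype ι] {z c : ι → ℝ} {S : Finset ι}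
    {u : ℝ} (hu : 0 ≤ u) (hzc : ∀ i ∉ S, z i * c i = 0) (hc : ∀ i ∈ S, |c i| ≤ u) :
    z ⬝ᵥ c ≤ u * (√(#S : ℝ) * √(z ⬝ᵥ z)) := by
  calc z ⬝ᵥ c = ∑ i ∈ S, z i * c i :=
        (sum_subset (subset_univ S) fun i _ hi => hzc i hi).symm
    _ ≤ ∑ i ∈ S, u * (1 * |z i|) := sum_le_sum fun i hi => by
        rw [one_mul, mul_comm u]
        exact (le_abs_self _).trans ((abs_mul _ _).trans_le
          (mul_le_mul_of_nonneg_left (hc i hi) (abs_nonneg _)))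
    _ ≤ u * (√(∑ i ∈ S, (1 : ℝ) ^ 2) * √(∑ i ∈ S, |z i| ^ 2)) := by
        rw [← mul_sum]
        exact mul_le_mul_of_nonneg_left (Real.sum_mul_le_sqrt_mul_sqrt _ _ _) hu
    _ ≤ u * (√(#S : ℝ) * √(z ⬝ᵥ z)) := by
        gcongr
        · simp
        · rw [← sum_sq_eq_dotProduct_self]
          simp only [sq_abs]
          exact sum_le_sum_of_subset_of_nonneg (subset_univ S) fun i _ _ => sq_nonneg _

lemma mulVec_dotProduct_mulVec {m n : Type*} [Fintype m] [Fintype n] (A : Matrix m n ℝ)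
    (v w : n → ℝ) : (A *ᵥ v) ⬝ᵥ (A *ᵥ w) = (Aᵀ *ᵥ (A *ᵥ v)) ⬝ᵥ w := by
  rw [dotProduct_mulVec, mulVec_transpose]

namespace RIP

variable {m n K : ℕ} {A : Matrix (Fin m) (Fin n) ℝ} {δ : ℝ}

lemma mulVec_dotProduct_self_bounds (hRIP : RIP A K δ) {S : Finset (Fin n)} (hS : #S ≤ K)
    {x : Fin n → ℝ} (hx : ∀ i ∉ S, x i = 0) :
    (1 - δ) * (x ⬝ᵥ x) ≤ (A *ᵥ x) ⬝ᵥ (A *ᵥ x) ∧ (A *ᵥ x) ⬝ᵥ (A *ᵥ x) ≤ (1 + δ) * (x ⬝ᵥ x) := by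
  simpa only [sum_sq_eq_dotProduct_self] using hRIP x ⟨S, hS, hx⟩

lemma dotProduct_sub_half_mul_le (hRIP : RIP A K δ) {S : Finset (Fin n)} (hS : #S ≤ K)
    {x y : Fin n → ℝ} (hx : ∀ i ∉ S, x i = 0) (hy : ∀ i ∉ S, y i = 0) :
    x ⬝ᵥ y - δ / 2 * (x ⬝ᵥ x + y ⬝ᵥ y) ≤ (A *ᵥ x) ⬝ᵥ (A *ᵥ y) := by
  have hadd := (hRIP.mulVec_dotProduct_self_bounds hS (x := x + y) fun i hi => by
    simp [hx i hi, hy i hi]).1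
  have hsub := (hRIP.mulVec_dotProduct_self_bounds hS (x := x - y) fun i hi => by
    simp [hx i hi, hy i hi]).2
  simp only [mulVec_add, mulVec_sub, add_dotProduct, dotProduct_add, sub_dotProduct,
    dotProduct_sub, dotProduct_comm y x, dotProduct_comm (A *ᵥ y) (A *ᵥ x)] at hadd hsub
  linarith

lemma dotProduct_sub_mul_sqrt_le (hRIP : RIP A K δ) {S : Finset (Fin n)} (hS : #S ≤ K)
    {x y : Fin n → ℝ} (hx : ∀ i ∉ S, x i = 0) (hy : ∀ i ∉ S, y i = 0) :
    x ⬝ᵥ y - δ * (√(x ⬝ᵥ x) * √(y ⬝ᵥ y)) ≤ (A *ᵥ x) ⬝ᵥ (A *ᵥ y) := by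
  rcases eq_or_ne x 0 with rfl | hx0
  · simp
  rcases eq_or_ne y 0 with rfl | hy0
  · simp
  set p := √(x ⬝ᵥ x)
  set q := √(y ⬝ᵥ y)
  have hp2 : p ^ 2 = x ⬝ᵥ x := Real.sq_sqrt (dotProduct_self_nonneg x)
  have hq2 : q ^ 2 = y ⬝ᵥ y := Real.sq_sqrt (dotProduct_self_nonneg y)
  have hpq : 0 < p * q := by
    refine mul_pos (Real.sqrt_pos.2 ?_) (Real.sqrt_pos.2 ?_)
    · exact (dotProduct_self_nonneg x).lt_of_ne (Ne.symm (dotProduct_self_eq_zero.not.2 hx0))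
    · exact (dotProduct_self_nonneg y).lt_of_ne (Ne.symm (dotProduct_self_eq_zero.not.2 hy0))
  have h := hRIP.dotProduct_sub_half_mul_le hS (x := q • x) (y := p • y)
    (fun i hi => by simp [hx i hi]) (fun i hi => by simp [hy i hi])
  simp only [mulVec_smul, smul_dotProduct, dotProduct_smul, smul_eq_mul, ← hp2, ← hq2] at h
  refine le_of_mul_le_mul_left ?_ hpq
  linear_combination h

lemma le_mulVec_dotProduct_sub_mul_abs (hRIP : RIP A K δ) {U : Finset (Fin n)} (hU : #U + 1 ≤ K)
    {z : Fin n → ℝ} (hz : ∀ i ∉ U, z i = 0) {j : Fin n} (hj : j ∉ U) (a : ℝ) :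
    z ⬝ᵥ z - δ * (√(z ⬝ᵥ z) * √(z ⬝ᵥ z + a ^ 2)) ≤
      (A *ᵥ z) ⬝ᵥ (A *ᵥ z) - a * |(Aᵀ *ᵥ (A *ᵥ z)) j| := by
  set c := Aᵀ *ᵥ (A *ᵥ z)
  obtain ⟨t, ht2, htc⟩ : ∃ t : ℝ, t ^ 2 = a ^ 2 ∧ c j * t = -(a * |c j|) := by
    rcases le_total 0 (c j) with h | h
    · exact ⟨-a, by ring, by rw [abs_of_nonneg h]; ring⟩
    · exact ⟨a, rfl, by rw [abs_of_nonpos h]; ring⟩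
  have hsupp : ∀ i ∉ insert j U, (z + Pi.single j t : Fin n → ℝ) i = 0 := fun i hi => by
    rw [mem_insert, not_or] at hi
    simp [hz i hi.2, hi.1]
  have h := hRIP.dotProduct_sub_mul_sqrt_le ((card_insert_le j U).trans hU)
    (fun i hi => hz i fun hiU => hi (mem_insert_of_mem hiU)) hsupp
  have hcol : (A *ᵥ z) ⬝ᵥ (A *ᵥ Pi.single j t) = c j * t := by
    rw [mulVec_dotProduct_mulVec, dotProduct_single]
  rw [mulVec_add, dotProduct_add (A *ᵥ z), hcol, htc] at h
  simpa [dotProduct_add, add_dotProduct, hz j hj, sq, ← ht2, sub_eq_add_neg] using h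

theorem one_div_sqrt_card_mul_le_sup'_sub_sup' (hRIP : RIP A K δ) {U S : Finset (Fin n)}
    (hK : #U + 1 ≤ K) {z : Fin n → ℝ} (hz : ∀ i ∉ U, z i = 0)
    (horth : ∀ i ∈ U, i ∉ S → (Aᵀ *ᵥ (A *ᵥ z)) i = 0) (hS : S.Nonempty) (hU : Uᶜ.Nonempty) :
    1 / √(#S : ℝ) * ((1 - √((#S : ℝ) + 1) * δ) * √(z ⬝ᵥ z)) ≤
      S.sup' hS (fun i => |(Aᵀ *ᵥ (A *ᵥ z)) i|) - Uᶜ.sup' hU (fun i => |(Aᵀ *ᵥ (A *ᵥ z)) i|) := by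
  set c := Aᵀ *ᵥ (A *ᵥ z) with hc
  set u := S.sup' hS (fun i => |c i|)
  obtain ⟨j, hj, hjmax⟩ := exists_mem_eq_sup' hU (fun i => |c i|)
  rw [hjmax]
  have hcu : ∀ i ∈ S, |c i| ≤ u := fun i hi => le_sup' (fun i => |c i|) hi
  have hu : 0 ≤ u := (abs_nonneg _).trans (hcu _ hS.choose_spec)
  have hs : 0 < √(#S : ℝ) := Real.sqrt_pos.2 (Nat.cast_pos.2 hS.card_pos)
  have hzz := dotProduct_self_nonneg z
  have hupper : (A *ᵥ z) ⬝ᵥ (A *ᵥ z) ≤ u * (√(#S : ℝ) * √(z ⬝ᵥ z)) := by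
    rw [mulVec_dotProduct_mulVec, dotProduct_comm]
    refine dotProduct_le_mul_sqrt_card_mul_sqrt (c := c) hu (fun i hiS => ?_) hcu
    by_cases hiU : i ∈ U
    · rw [horth i hiU hiS, mul_zero]
    · rw [hz i hiU, zero_mul]
  have hlower := hRIP.le_mulVec_dotProduct_sub_mul_abs hK hz (mem_compl.1 hj)
    (√(#S : ℝ) * √(z ⬝ᵥ z))
  have hnorm : √(z ⬝ᵥ z + (√(#S : ℝ) * √(z ⬝ᵥ z)) ^ 2) = √((#S : ℝ) + 1) * √(z ⬝ᵥ z) := by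
    rw [mul_pow, Real.sq_sqrt (Nat.cast_nonneg _), Real.sq_sqrt hzz,
      ← Real.sqrt_mul (by positivity)]
    ring_nf
  rw [hnorm, ← hc] at hlower
  have hN : √(z ⬝ᵥ z) * ((1 - √((#S : ℝ) + 1) * δ) * √(z ⬝ᵥ z)) ≤
      √(z ⬝ᵥ z) * (√(#S : ℝ) * (u - |c j|)) := by
    nlinarith [Real.mul_self_sqrt hzz]
  rcases (Real.sqrt_nonneg (z ⬝ᵥ z)).eq_or_lt with h0 | hpos
  · have hz0 : z = 0 := dotProduct_self_eq_zero.1 ((Real.sqrt_eq_zero hzz).1 h0.symm)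
    simp [hc, hz0, hu]
  · rw [one_div_mul_eq_div, div_le_iff₀ hs, mul_comm _ √(#S : ℝ)]
    exact le_of_mul_le_mul_left hN hpos

end RIP

theorem stmt4_general (m n k g b t : ℕ)
    (A : Matrix (Fin m) (Fin n) ℝ) (δ : ℝ)
    (hRIP : RIP A (k + b + 1) δ)
    (T Λ : Finset (Fin n))
    (hcard : (T ∪ Λ).card = k + b) (hTΛ : (T \ Λ).card = k - g - t)
    (z : Fin n → ℝ) (hzsupp : ∀ i ∉ T ∪ Λ, z i = 0)
    (horth : ∀ i ∈ Λ, (∑ l, A l i * (A.mulVec z) l) = 0)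
    (h1 : (T \ Λ).Nonempty) (h2 : ((T ∪ Λ)ᶜ).Nonempty) :
    ((T \ Λ).sup' h1 fun i => |∑ l, A l i * (A.mulVec z) l|) -
      (((T ∪ Λ)ᶜ).sup' h2 fun i => |∑ l, A l i * (A.mulVec z) l|) ≥
    (1 / Real.sqrt ((k : ℝ) - g - t)) *
      ((1 - Real.sqrt ((k : ℝ) - g - t + 1) * δ) * Real.sqrt (∑ i, z i ^ 2)) := by
  have hgt : g + t < k := by
    have := h1.card_pos
    omega
  have hcast : (k : ℝ) - g - t = #(T \ Λ) := by
    rw [hTΛ, Nat.sub_sub, Nat.cast_sub hgt.le, Nat.cast_add]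
    ring
  rw [hcast, sum_sq_eq_dotProduct_self]
  -- `∑ l, A l i * (A *ᵥ z) l` is `(Aᵀ *ᵥ (A *ᵥ z)) i` by definition of `mulVec`.
  refine hRIP.one_div_sqrt_card_mul_le_sup'_sub_sup' (by rw [hcard]) hzsupp
    (fun i hiU hiS => ?_) h1 h2
  refine horth i ?_
  by_contra hiΛ
  exact hiS (mem_sdiff.2 ⟨(mem_union.1 hiU).resolve_right hiΛ, hiΛ⟩)

/-- Main lemma: if `A` satisfies the RIP of order `k+b+1` with constant `δ`,
`Λ ⊆ T ∪ T₀`, `|T ∪ Λ| = k+b`, `|T \ Λ| = k−g−t ≥ 1`, and `z̃` is supported on `T ∪ Λ`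
with `A_Λᵀ A z̃ = 0`, then
`max_{i∈T\Λ} |⟨Ae_i, Az̃⟩| − max_{i∉T∪Λ} |⟨Ae_i, Az̃⟩|
  ≥ (1/√(k−g−t))(1 − √(k−g−t+1) δ)‖z̃‖₂`. -/
theorem stmt4 (m n k g b t : ℕ) (hgt : g + t < k)
    (A : Matrix (Fin m) (Fin n) ℝ) (δ : ℝ)
    (hRIP : RIP A (k + b + 1) δ)
    (T Λ T₀ : Finset (Fin n)) (hΛ : Λ ⊆ T ∪ T₀)
    (hcard : (T ∪ Λ).card = k + b) (hTΛ : (T \ Λ).card = k - g - t)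
    (z : Fin n → ℝ) (hzsupp : ∀ i ∉ T ∪ Λ, z i = 0)
    (horth : ∀ i ∈ Λ, (∑ l, A l i * (A.mulVec z) l) = 0)
    (h1 : (T \ Λ).Nonempty) (h2 : ((T ∪ Λ)ᶜ).Nonempty) :
    ((T \ Λ).sup' h1 fun i => |∑ l, A l i * (A.mulVec z) l|) -
      (((T ∪ Λ)ᶜ).sup' h2 fun i => |∑ l, A l i * (A.mulVec z) l|) ≥
    (1 / Real.sqrt ((k : ℝ) - g - t)) *
      ((1 - Real.sqrt ((k : ℝ) - g - t + 1) * δ) * Real.sqrt (∑ i, z i ^ 2)) :=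
  stmt4_general m n k g b t A δ hRIP T Λ hcard hTΛ z hzsupp horth h1 h2
end

section
/- Let K ≥ 1 and consider the block matrix AᵀA ∈ ℝ^{(k+b+1)×(k+b+1)} where A has a (k−g)×(k−g) block √(K/(K+1))·I with K = k−g, an identity block I_{g+b+1}, and a last column with entries 1/√((K+1)K) in the first k−g rows. Then the eigenvalues of AᵀA are K/(K+1) with multiplicity k−g−1, 1 with multiplicity g+b, and 1 ± 1/√(K+1), each with multiplicity 1. -/
/-!
Moving the last coordinate into a separate block, `A = [[D, u], [0, 1]]` with `D` diagonal, so
`AᵀA = [[D², Du], [(Du)ᵀ, 1 + ‖u‖²]]` is an arrow matrix. For `x` off the diagonal of `D²`, the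
Schur complement of the diagonal block gives
`det (x - AᵀA) = ∏ᵢ (x - dᵢ) · (x - e - ∑ᵢ wᵢ² / (x - dᵢ))`.
With `K = k - g`, here `d` equals `K/(K+1)` on `K` coordinates and `1` on the others, `w = 1/(K+1)`
on the first `K` coordinates and `e = 1 + 1/(K+1)`; multiplying the Schur factor by
`x - K/(K+1)` gives `(x - 1)² - 1/(K+1)`. Two polynomials agreeing at all but two points are equal.
-/

open Matrix Polynomial

@[to_additive]
theorem Fin.prod_ite_val_lt {M : Type*} [CommMonoid M] {n m : ℕ} (hmn : m ≤ n) (u v : M) :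
    ∏ i : Fin n, (if (i : ℕ) < m then u else v) = u ^ m * v ^ (n - m) := by
  rw [Finset.prod_ite, Finset.prod_const, Finset.prod_const, Fin.card_filter_val_lt,
    Finset.filter_not, Finset.card_sdiff_of_subset (Finset.filter_subset _ _),
    Fin.card_filter_val_lt, Finset.card_univ, Fintype.card_fin, min_eq_right hmn]

namespace Matrix

variable {n : Type*} [Fintype n] [DecidableEq n]

theorem fromBlocks_diagonal_replicateCol_transpose_mul_self {R : Type*} [CommSemiring R]
    (δ u : n → R) :
    (fromBlocks (diagonal δ) (replicateCol (Fin 1) u) 0 1)ᵀ *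
        fromBlocks (diagonal δ) (replicateCol (Fin 1) u) 0 1 =
      fromBlocks (diagonal fun i => δ i * δ i) (replicateCol (Fin 1) fun i => δ i * u i)
        (replicateRow (Fin 1) fun i => δ i * u i) (of fun _ _ => ∑ i, u i * u i + 1) := by
  rw [fromBlocks_transpose, fromBlocks_multiply]
  ext (i | i) (j | j) <;> simp [mul_apply, diagonal_apply, mul_comm, Fin.fin_one_eq_zero]

variable {F : Type*} [Field F]

theorem det_fromBlocks_diagonal_replicateCol_replicateRow (d w : n → F) (e : F)
    (hd : ∀ i, d i ≠ 0) :
    (fromBlocks (diagonal d) (replicateCol (Fin 1) w) (replicateRow (Fin 1) w)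
      (of fun _ _ => e)).det = (∏ i, d i) * (e - ∑ i, w i ^ 2 / d i) := by
  have hinv : (diagonal d)⁻¹ = diagonal fun i => (d i)⁻¹ :=
    inv_eq_right_inv (by simp [diagonal_mul_diagonal, hd])
  have : Invertible (diagonal d) :=
    invertibleOfRightInverse _ _ (mul_nonsing_inv _ (by simp [Finset.prod_ne_zero_iff, hd]))
  rw [det_fromBlocks₁₁, invOf_eq_nonsing_inv, hinv, det_diagonal, det_unique]
  congr 1
  simp only [sub_apply, of_apply, mul_apply, replicateRow_apply, replicateCol_apply, diagonal_apply,
    mul_ite, mul_zero, Finset.sum_ite_eq', Finset.mem_univ, if_true]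
  exact congrArg (e - ·) (Finset.sum_congr rfl fun i _ => by ring)

theorem eval_charpoly_fromBlocks_diagonal_replicateCol_replicateRow (d w : n → F) (e x : F)
    (hx : ∀ i, x ≠ d i) :
    (fromBlocks (diagonal d) (replicateCol (Fin 1) w) (replicateRow (Fin 1) w)
      (of fun _ _ => e)).charpoly.eval x =
      (∏ i, (x - d i)) * (x - e - ∑ i, w i ^ 2 / (x - d i)) := by
  have hblocks : scalar (n ⊕ Fin 1) x - fromBlocks (diagonal d) (replicateCol (Fin 1) w)
      (replicateRow (Fin 1) w) (of fun _ _ => e) = fromBlocks (diagonal fun i => x - d i)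
      (replicateCol (Fin 1) (-w)) (replicateRow (Fin 1) (-w)) (of fun _ _ => x - e) := by
    ext (i | i) (j | j)
    · by_cases h : i = j <;> simp [h]
    · simp
    · simp
    · simp [Subsingleton.elim i j]
  rw [eval_charpoly, hblocks,
    det_fromBlocks_diagonal_replicateCol_replicateRow _ _ _ fun i => sub_ne_zero.2 (hx i)]
  simp

end Matrix

namespace SharpnessMatrix

theorem schur_factor_eq (K x : ℝ) (hK : 0 < K) :
    (x - K / (K + 1)) * (x - (1 / (K + 1) + 1)) - K * (1 / (K + 1)) ^ 2 =
      (x - (1 - 1 / √(K + 1))) * (x - (1 + 1 / √(K + 1))) := by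
  have hs : (1 / √(K + 1)) ^ 2 = 1 / (K + 1) := by
    rw [div_pow, one_pow, Real.sq_sqrt (by positivity)]
  rw [show (x - (1 - 1 / √(K + 1))) * (x - (1 + 1 / √(K + 1))) = (x - 1) ^ 2 - (1 / √(K + 1)) ^ 2
    by ring, hs]
  field_simp
  ring

variable (m n : ℕ)

noncomputable def diag : Fin n → ℝ := fun i => if (i : ℕ) < m then √((m : ℝ) / (m + 1)) else 1

noncomputable def col : Fin n → ℝ := fun i => if (i : ℕ) < m then 1 / √(((m : ℝ) + 1) * m) else 0

/-- The matrix `A` of the statement, with the last index split off as `Fin 1`. -/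
noncomputable def blocks : Matrix (Fin n ⊕ Fin 1) (Fin n ⊕ Fin 1) ℝ :=
  fromBlocks (diagonal (diag m n)) (replicateCol (Fin 1) (col m n)) 0 1

variable {m n}

theorem diag_mul_self (i : Fin n) :
    diag m n i * diag m n i = if (i : ℕ) < m then (m : ℝ) / (m + 1) else 1 := by
  simp only [diag]
  split_ifs
  · exact Real.mul_self_sqrt (by positivity)
  · exact one_mul 1

theorem diag_mul_col (hm : 0 < m) (i : Fin n) :
    diag m n i * col m n i = if (i : ℕ) < m then 1 / ((m : ℝ) + 1) else 0 := by
  have hm' : (0 : ℝ) < m := by exact_mod_cast hm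
  simp only [diag, col]
  split_ifs
  · rw [mul_one_div, ← Real.sqrt_div' _ (by positivity),
      show (m : ℝ) / (m + 1) / ((m + 1) * m) = (1 / (m + 1)) ^ 2 by field_simp,
      Real.sqrt_sq (by positivity)]
  · exact mul_zero 1

theorem sum_col_mul_self (hm : 0 < m) (hmn : m ≤ n) :
    ∑ i, col m n i * col m n i = 1 / ((m : ℝ) + 1) := by
  have hm' : (0 : ℝ) < m := by exact_mod_cast hm
  have h : ∀ i, col m n i * col m n i = if (i : ℕ) < m then 1 / (((m : ℝ) + 1) * m) else 0 := by
    intro i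
    simp only [col]
    split_ifs
    · rw [div_mul_div_comm, one_mul, Real.mul_self_sqrt (by positivity)]
    · exact mul_zero 0
  simp only [h, Fin.sum_ite_val_lt hmn, smul_zero, add_zero, nsmul_eq_mul]
  field_simp

theorem eval_charpoly_transpose_mul_self (hm : 0 < m) (hmn : m ≤ n) (x : ℝ)
    (hxm : x ≠ m / (m + 1)) (hx1 : x ≠ 1) :
    ((blocks m n)ᵀ * blocks m n).charpoly.eval x =
      (x - m / (m + 1)) ^ (m - 1) * (x - 1) ^ (n - m) *
        ((x - (1 - 1 / √((m : ℝ) + 1))) * (x - (1 + 1 / √((m : ℝ) + 1)))) := by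
  have hxc : x - m / (m + 1) ≠ 0 := sub_ne_zero.2 hxm
  have hxd : ∀ i, x ≠ diag m n i * diag m n i := fun i => by
    rw [diag_mul_self]; split_ifs <;> assumption
  have hprod : ∏ i, (x - diag m n i * diag m n i) = (x - m / (m + 1)) ^ m * (x - 1) ^ (n - m) := by
    simp only [diag_mul_self, apply_ite (x - ·), Fin.prod_ite_val_lt hmn]
  have hsum : ∑ i, (diag m n i * col m n i) ^ 2 / (x - diag m n i * diag m n i) =
      m * (1 / ((m : ℝ) + 1)) ^ 2 / (x - m / (m + 1)) := by
    simp only [diag_mul_col hm, diag_mul_self, apply_ite (· ^ 2), apply_ite (x - ·),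
      ite_div_ite, zero_pow two_ne_zero, zero_div, Fin.sum_ite_val_lt hmn, smul_zero, add_zero,
      nsmul_eq_mul, mul_div_assoc]
  rw [blocks, fromBlocks_diagonal_replicateCol_transpose_mul_self,
    eval_charpoly_fromBlocks_diagonal_replicateCol_replicateRow _ _ _ _ hxd, hprod, hsum,
    sum_col_mul_self hm hmn, ← schur_factor_eq _ _ (by positivity),
    ← pow_sub_one_mul hm.ne']
  have hcancel : (x - m / (m + 1)) * (m * (1 / ((m : ℝ) + 1)) ^ 2 / (x - m / (m + 1))) =
      m * (1 / ((m : ℝ) + 1)) ^ 2 := mul_div_cancel₀ _ hxc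
  linear_combination -(x - m / (m + 1)) ^ (m - 1) * (x - 1) ^ (n - m) * hcancel

theorem charpoly_transpose_mul_self (hm : 0 < m) (hmn : m ≤ n) :
    ((blocks m n)ᵀ * blocks m n).charpoly =
      (X - C ((m : ℝ) / (m + 1))) ^ (m - 1) * (X - C 1) ^ (n - m) *
        (X - C (1 - 1 / √((m : ℝ) + 1))) * (X - C (1 + 1 / √((m : ℝ) + 1))) := by
  refine eq_of_infinite_eval_eq _ _ <| Set.Infinite.mono (s := {(m : ℝ) / (m + 1), 1}ᶜ)
    (fun x hx => ?_) (Set.toFinite _).infinite_compl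
  simp only [Set.mem_compl_iff, Set.mem_insert_iff, Set.mem_singleton_iff, not_or] at hx
  rw [Set.mem_ofPred_eq, eval_charpoly_transpose_mul_self hm hmn x hx.1 hx.2]
  simp only [eval_mul, eval_pow, eval_sub, eval_X, eval_C, mul_assoc]

end SharpnessMatrix

/-- Eigenvalues of `AᵀA` for the sharpness construction: the characteristic polynomial of
`AᵀA` is `(X − (K/(K+1)))^{k−g−1} (X − 1)^{g+b} (X − (1 − 1/√(K+1))) (X − (1 + 1/√(K+1)))`
with `K = k − g`. -/
theorem stmt6 (k g b : ℕ) (hg : g < k)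
    (A : Matrix (Fin (k + b + 1)) (Fin (k + b + 1)) ℝ)
    (hA : ∀ i j : Fin (k + b + 1), A i j =
      if i = j then
        (if (i : ℕ) < k - g then Real.sqrt (((k : ℝ) - g) / ((k : ℝ) - g + 1)) else 1)
      else if (j : ℕ) = k + b ∧ (i : ℕ) < k - g then
        1 / Real.sqrt ((((k : ℝ) - g + 1)) * ((k : ℝ) - g))
      else 0) :
    (A.transpose * A).charpoly =
      (Polynomial.X - Polynomial.C (((k : ℝ) - g) / ((k : ℝ) - g + 1))) ^ (k - g - 1) *
      (Polynomial.X - Polynomial.C (1 : ℝ)) ^ (g + b) *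
      (Polynomial.X - Polynomial.C (1 - 1 / Real.sqrt ((k : ℝ) - g + 1))) *
      (Polynomial.X - Polynomial.C (1 + 1 / Real.sqrt ((k : ℝ) - g + 1))) := by
  have hcast : (k : ℝ) - g = ((k - g : ℕ) : ℝ) := (Nat.cast_sub hg.le).symm
  rw [hcast] at hA ⊢
  have hblocks : reindex finSumFinEquiv.symm finSumFinEquiv.symm A =
      SharpnessMatrix.blocks (k - g) (k + b) := by
    ext (i | i) (j | j) <;>
      simp only [reindex_apply, Equiv.symm_symm, submatrix_apply, finSumFinEquiv_apply_left,
        finSumFinEquiv_apply_right, hA, Fin.ext_iff, Fin.val_castAdd, Fin.val_natAdd,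
        Fin.fin_one_eq_zero, Fin.val_eq_zero, add_zero, SharpnessMatrix.blocks, fromBlocks_apply₁₁,
        fromBlocks_apply₁₂, fromBlocks_apply₂₁, fromBlocks_apply₂₂, diagonal_apply,
        replicateCol_apply, Matrix.zero_apply, one_apply_eq, SharpnessMatrix.diag,
        SharpnessMatrix.col] <;>
      grind
  have hreindex : reindex finSumFinEquiv.symm finSumFinEquiv.symm (Aᵀ * A) =
      (reindex finSumFinEquiv.symm finSumFinEquiv.symm A)ᵀ *
        reindex finSumFinEquiv.symm finSumFinEquiv.symm A := by
    rw [transpose_reindex, reindex_apply, reindex_apply, reindex_apply, submatrix_mul_equiv]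
  rw [← charpoly_reindex finSumFinEquiv.symm, hreindex, hblocks,
    SharpnessMatrix.charpoly_transpose_mul_self (by omega) (by omega),
    show k + b - (k - g) = g + b by omega]
end

section
/- The matrix A of the sharpness construction satisfies the RIP of order k+b+1 with restricted isometry constant exactly δ_{k+b+1} = 1/√(k−g+1). -/
/-!
Let `T = {i | i < k - g}`, `M = #T = k - g` and `L` the last index, and write
`Q = ∑_{i ∈ T} xᵢ²`, `s = ∑_{i ∈ T} xᵢ`, `ℓ = x_L`. Expanding gives
`(M + 1) (‖Ax‖² - ‖x‖²) = -Q + 2ℓs + ℓ²`. As `s² ≤ MQ` (Cauchy–Schwarz), this is dominated by the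
quadratic form `(u, ℓ) ↦ -u² + 2√M uℓ + ℓ²` at `u = √Q`, whose eigenvalues are `±√(M + 1)`.
Hence `|‖Ax‖² - ‖x‖²| ≤ ‖x‖² / √(M + 1)`, with equality at `x = 𝟙_T + (√(M + 1) + 1) e_L`.
-/

open scoped BigOperators

open Finset Matrix

namespace RIP

variable {m n : ℕ} {A : Matrix (Fin m) (Fin n) ℝ} {δ : ℝ}

theorem of_abs_sub_le (k : ℕ)
    (h : ∀ x, |∑ i, (A *ᵥ x) i ^ 2 - ∑ i, x i ^ 2| ≤ δ * ∑ i, x i ^ 2) : RIP A k δ := by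
  intro x _
  have := abs_le.mp (h x)
  constructor <;> linarith

theorem le_of_sum_sq_mulVec_eq (hA : RIP A n δ) {x : Fin n → ℝ} (hx : x ≠ 0) {ε : ℝ}
    (hAx : ∑ i, (A *ᵥ x) i ^ 2 = (1 + ε) * ∑ i, x i ^ 2) : ε ≤ δ := by
  have hpos : 0 < ∑ i, x i ^ 2 := by
    obtain ⟨j, hj⟩ := Function.ne_iff.mp hx
    exact sum_pos' (fun i _ => sq_nonneg (x i)) ⟨j, mem_univ j, pow_two_pos_of_ne_zero hj⟩
  have := (hA x ⟨univ, by simp, by simp⟩).2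
  rw [hAx] at this
  linarith [le_of_mul_le_mul_right this hpos]

end RIP

theorem abs_neg_add_two_mul_add_sq_le {M r Q s ℓ : ℝ} (hM : 0 < M) (hr : 0 ≤ r)
    (hr2 : r ^ 2 = M + 1) (hQ : 0 ≤ Q) (hs : s ^ 2 ≤ M * Q) :
    |-Q + 2 * ℓ * s + ℓ ^ 2| ≤ r * (Q + ℓ ^ 2) := by
  have hr1 : 1 < r := by nlinarith
  -- after multiplying by `r ± 1`, `s ^ 2 ≤ M * Q = (r ^ 2 - 1) * Q` completes a square
  rw [abs_le]
  constructor
  · have : 0 ≤ (r + 1) * ((r - 1) * Q + (r + 1) * ℓ ^ 2 + 2 * ℓ * s) := by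
      nlinarith [sq_nonneg (s + (r + 1) * ℓ)]
    nlinarith [nonneg_of_mul_nonneg_right this (by linarith)]
  · have : 0 ≤ (r - 1) * ((r + 1) * Q + (r - 1) * ℓ ^ 2 - 2 * ℓ * s) := by
      nlinarith [sq_nonneg (s - (r - 1) * ℓ)]
    nlinarith [nonneg_of_mul_nonneg_right this (by linarith)]

section Arrow

variable {ι : Type*} [Fintype ι] [DecidableEq ι]

def arrowMatrix (T : Finset ι) (L : ι) (d c : ℝ) : Matrix ι ι ℝ := fun i j =>
  if i = j then (if i ∈ T then d else 1) else if j = L ∧ i ∈ T then c else 0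

variable {T : Finset ι} {L : ι} {d c : ℝ}

theorem arrowMatrix_mulVec (hL : L ∉ T) (x : ι → ℝ) (i : ι) :
    (arrowMatrix T L d c *ᵥ x) i = if i ∈ T then d * x i + c * x L else x i := by
  split_ifs with hi
  · have hiL : i ≠ L := ne_of_mem_of_not_mem hi hL
    have row : ∀ j, arrowMatrix T L d c i j =
        (if i = j then d else 0) + (if j = L then c else 0) := by
      intro j
      by_cases hij : i = j
      · subst hij
        simp [arrowMatrix, hi, hiL]
      · simp [arrowMatrix, hi, hij]
    simp [mulVec, dotProduct, row, add_mul, ite_mul, sum_add_distrib]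
  · simp [mulVec, dotProduct, arrowMatrix, hi, ite_mul]

theorem sum_sq_arrowMatrix_mulVec (hL : L ∉ T) (x : ι → ℝ) :
    ∑ i, (arrowMatrix T L d c *ᵥ x) i ^ 2 = ∑ i, x i ^ 2 + ((d ^ 2 - 1) * ∑ i ∈ T, x i ^ 2
      + 2 * (d * c) * x L * ∑ i ∈ T, x i + #T * c ^ 2 * x L ^ 2) := by
  simp only [arrowMatrix_mulVec hL]
  rw [← sum_add_sum_compl T, ← sum_add_sum_compl T (fun i => x i ^ 2)]
  simp only [ite_pow]
  rw [sum_ite_of_true (fun i hi => hi), sum_ite_of_false (fun i hi => by simpa using hi)]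
  simp only [add_sq, sum_add_distrib, ← mul_sum, ← sum_mul, sum_const, nsmul_eq_mul, mul_pow]
  ring

theorem sum_sq_arrowMatrix_mulVec_sub (hL : L ∉ T) (hd : d ^ 2 * (#T + 1) = #T)
    (hdc : d * c * (#T + 1) = 1) (hc : #T * c ^ 2 * (#T + 1) = 1) (x : ι → ℝ) :
    (#T + 1) * (∑ i, (arrowMatrix T L d c *ᵥ x) i ^ 2 - ∑ i, x i ^ 2) =
      -∑ i ∈ T, x i ^ 2 + 2 * x L * ∑ i ∈ T, x i + x L ^ 2 := by
  rw [sum_sq_arrowMatrix_mulVec hL]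
  linear_combination (∑ i ∈ T, x i ^ 2) * hd + (2 * x L * ∑ i ∈ T, x i) * hdc + x L ^ 2 * hc

theorem abs_sum_sq_arrowMatrix_mulVec_sub_le (hT : T.Nonempty) (hL : L ∉ T)
    (hd : d ^ 2 * (#T + 1) = #T) (hdc : d * c * (#T + 1) = 1) (hc : #T * c ^ 2 * (#T + 1) = 1)
    (x : ι → ℝ) :
    |∑ i, (arrowMatrix T L d c *ᵥ x) i ^ 2 - ∑ i, x i ^ 2| ≤
      1 / √(#T + 1) * ∑ i, x i ^ 2 := by
  set r := √((#T : ℝ) + 1)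
  have hr2 : r ^ 2 = #T + 1 := Real.sq_sqrt (by positivity)
  have hr : 0 < r := by positivity
  have hq := abs_neg_add_two_mul_add_sq_le (ℓ := x L) (Nat.cast_pos.2 hT.card_pos) hr.le hr2
    (sum_nonneg fun i _ => sq_nonneg (x i)) sq_sum_le_card_mul_sum_sq
  have hsub : ∑ i ∈ T, x i ^ 2 + x L ^ 2 ≤ ∑ i, x i ^ 2 := by
    rw [add_comm, ← sum_insert (f := fun i => x i ^ 2) hL]
    exact sum_le_univ_sum_of_nonneg fun i => sq_nonneg (x i)
  rw [← sum_sq_arrowMatrix_mulVec_sub hL hd hdc hc, ← hr2, abs_mul,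
    abs_of_pos (by positivity)] at hq
  rw [one_div_mul_eq_div, le_div_iff₀ hr]
  nlinarith

theorem exists_sum_sq_arrowMatrix_mulVec_eq (hL : L ∉ T)
    (hd : d ^ 2 * (#T + 1) = #T) (hdc : d * c * (#T + 1) = 1) (hc : #T * c ^ 2 * (#T + 1) = 1) :
    ∃ y : ι → ℝ, y ≠ 0 ∧ ∑ i, (arrowMatrix T L d c *ᵥ y) i ^ 2 =
      (1 + 1 / √(#T + 1)) * ∑ i, y i ^ 2 := by
  set r := √((#T : ℝ) + 1)
  have hr2 : r ^ 2 = #T + 1 := Real.sq_sqrt (by positivity)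
  have hr : 0 < r := by positivity
  set y : ι → ℝ := fun i => if i ∈ T then 1 else if i = L then r + 1 else 0
  have hyL : y L = r + 1 := by simp [y, hL]
  have hQ : ∑ i ∈ T, y i ^ 2 = #T := by simp [y, sum_ite_of_true]
  have hs : ∑ i ∈ T, y i = #T := by simp [y, sum_ite_of_true]
  have hy2 : ∑ i, y i ^ 2 = #T + (r + 1) ^ 2 := by
    rw [← sum_add_sum_compl T, hQ]
    simp [y, sum_ite, hL]
  have hy0 : y ≠ 0 := fun h =>
    (by linarith : (0 : ℝ) < r + 1).ne' (hyL.symm.trans (congrFun h L))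
  refine ⟨y, hy0, ?_⟩
  have key := sum_sq_arrowMatrix_mulVec_sub hL hd hdc hc y
  rw [hQ, hs, hyL, hy2, ← hr2] at key
  rw [hy2]
  have hdev :
      r * (∑ i, (arrowMatrix T L d c *ᵥ y) i ^ 2 - (#T + (r + 1) ^ 2)) = #T + (r + 1) ^ 2 := by
    refine mul_left_cancel₀ hr.ne' ?_
    linear_combination key - (r + 1) * hr2
  field_simp
  linear_combination hdev

end Arrow

theorem sharpness_coeffs {M : ℝ} (hM : 0 < M) :
    √(M / (M + 1)) ^ 2 * (M + 1) = M ∧ √(M / (M + 1)) * (1 / √((M + 1) * M)) * (M + 1) = 1 ∧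
      M * (1 / √((M + 1) * M)) ^ 2 * (M + 1) = 1 := by
  have hM1 : 0 < M + 1 := by linarith
  refine ⟨?_, ?_, ?_⟩
  · rw [Real.sq_sqrt (by positivity)]
    field_simp
  · rw [mul_one_div, ← Real.sqrt_div (by positivity),
      show M / (M + 1) / ((M + 1) * M) = (M + 1)⁻¹ ^ 2 by field_simp, Real.sqrt_sq (by positivity)]
    field_simp
  · rw [div_pow, Real.sq_sqrt (by positivity)]
    field_simp

/-- The matrix of the sharpness construction satisfies the RIP of order `k+b+1` with
restricted isometry constant exactly `1/√(k−g+1)`. -/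
theorem stmt7 (k g b : ℕ) (hg : g < k)
    (A : Matrix (Fin (k + b + 1)) (Fin (k + b + 1)) ℝ)
    (hA : ∀ i j : Fin (k + b + 1), A i j =
      if i = j then
        (if (i : ℕ) < k - g then Real.sqrt (((k : ℝ) - g) / ((k : ℝ) - g + 1)) else 1)
      else if (j : ℕ) = k + b ∧ (i : ℕ) < k - g then
        1 / Real.sqrt ((((k : ℝ) - g + 1)) * ((k : ℝ) - g))
      else 0) :
    RIP A (k + b + 1) (1 / Real.sqrt ((k : ℝ) - g + 1)) ∧
    ∀ δ : ℝ, RIP A (k + b + 1) δ → 1 / Real.sqrt ((k : ℝ) - g + 1) ≤ δ := by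
  set T : Finset (Fin (k + b + 1)) := {i | (i : ℕ) < k - g}
  have hcard : #T = k - g := by rw [Fin.card_filter_val_lt]; omega
  have hT : ((#T : ℕ) : ℝ) = (k : ℝ) - g := by rw [hcard, Nat.cast_sub hg.le]
  have hTne : T.Nonempty := card_pos.1 (by omega)
  have hL : Fin.last (k + b) ∉ T := by
    simp only [T, mem_filter, mem_univ, true_and, Fin.val_last]
    omega
  obtain ⟨hd, hdc, hc⟩ := sharpness_coeffs (M := (#T : ℝ)) (by positivity)
  have hA' : A = arrowMatrix T (Fin.last (k + b)) √(((k : ℝ) - g) / ((k : ℝ) - g + 1))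
      (1 / √(((k : ℝ) - g + 1) * ((k : ℝ) - g))) := by
    ext i j
    simp [hA, arrowMatrix, T, Fin.ext_iff]
  rw [← hT] at hA' ⊢
  subst hA'
  obtain ⟨y, hy, hAy⟩ := exists_sum_sq_arrowMatrix_mulVec_eq hL hd hdc hc
  exact ⟨RIP.of_abs_sub_le _ (abs_sum_sq_arrowMatrix_mulVec_sub_le hTne hL hd hdc hc),
    fun δ hδ => hδ.le_of_sum_sq_mulVec_eq hy hAy⟩
end

section
/- (Sharpness) For any positive integer k, integers 0 ≤ g < k and b ≥ 0, there exist a matrix A with δ_{k+b+1} = 1/√(k−g+1), a k-sparse vector x̄ with support T, |T| = k, and a prior support T₀ with |T∩T₀| = g, |T₀\T| = b, such that for the first OMP_{T₀} residual r⁰ = (I − P_{T₀}) A x̄, one has max_{i ∈ T\T₀} |⟨Ae_i, r⁰⟩| = max_{i ∉ T∪T₀} |⟨Ae_i, r⁰⟩| = (k−g)/(k−g+1); hence the algorithm may fail to select an index of T\T₀ in the first iteration. -/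
/-!
Put `M = T \ T₀`, `m = #M`, and let `L` be the index outside `T ∪ T₀`. The matrix is
`A = D + c 1_M e_Lᵀ`, where `D` is `√(m/(m+1))` on `M` and `1` elsewhere and `c = 1/√(m(m+1))`.
Expanding gives `‖Ax‖² - ‖x‖² = (2 x_L Σ_M x + x_L² - Σ_M x²)/(m+1)`. Cauchy–Schwarz gives
`(Σ_M x)² ≤ m Σ_M x²`, and then two AM–GM estimates with weights `√(m+1) ± 1` bound the right-hand
side by `‖x‖²/√(m+1)`. Equality holds at `x = 1_M + (√(m+1)+1) e_L`, so `1/√(m+1)` is the exact RIP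
constant of every order `≥ m+1`. The first residual is `r⁰ = A 1_M`, and `Aᵀ r⁰` equals `m/(m+1)`
on `M ∪ {L}` and vanishes elsewhere, in particular on `T₀`.
-/

open scoped BigOperators

open Finset Matrix

lemma Fin.card_filter_le_val_lt {n a c : ℕ} (hc : c ≤ n) :
    #{i : Fin n | a ≤ (i : ℕ) ∧ (i : ℕ) < c} = c - a := by
  simp only [← card_map Fin.valEmbedding, map_filter', Fin.exists_iff]
  rw [← Nat.card_Ico]
  congr 1
  ext x
  simp only [valEmbedding_apply, exists_and_left, exists_prop, exists_eq_right_right,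
    map_valEmbedding_univ, mem_filter, mem_Iio, mem_Ico]
  omega

lemma Fin.exists_finsets_card_inter_card_sdiff {k g b : ℕ} (hg : g ≤ k) :
    ∃ T T₀ : Finset (Fin (k + b + 1)), #T = k ∧ #(T ∩ T₀) = g ∧ #(T₀ \ T) = b ∧
      ∀ i, i ∉ T ∪ T₀ ↔ i = Fin.last (k + b) := by
  set T : Finset (Fin (k + b + 1)) := {i | (i : ℕ) < k}
  set T₀ : Finset (Fin (k + b + 1)) := {i | k - g ≤ (i : ℕ) ∧ (i : ℕ) < k + b}
  have hinter : T ∩ T₀ = ({i | k - g ≤ (i : ℕ) ∧ (i : ℕ) < k} : Finset (Fin _)) := by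
    ext i
    simp only [T, T₀, mem_inter, mem_filter, mem_univ, true_and]
    omega
  have hsdiff : T₀ \ T = ({i | k ≤ (i : ℕ) ∧ (i : ℕ) < k + b} : Finset (Fin _)) := by
    ext i
    simp only [T, T₀, mem_sdiff, mem_filter, mem_univ, true_and]
    omega
  refine ⟨T, T₀, ?_, ?_, ?_, fun i => ?_⟩
  · rw [Fin.card_filter_val_lt]
    omega
  · rw [hinter, Fin.card_filter_le_val_lt (by omega)]
    omega
  · rw [hsdiff, Fin.card_filter_le_val_lt (by omega)]
    omega
  · simp only [T, T₀, mem_union, mem_filter, mem_univ, true_and, Fin.ext_iff, Fin.val_last]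
    omega

lemma RIP.of_abs_sub_le_s8 {m n : ℕ} {A : Matrix (Fin m) (Fin n) ℝ} {δ : ℝ}
    (h : ∀ x, |∑ i, (A *ᵥ x) i ^ 2 - ∑ i, x i ^ 2| ≤ δ * ∑ i, x i ^ 2) (k : ℕ) :
    RIP A k δ := by
  intro x _
  obtain ⟨hlo, hhi⟩ := abs_le.mp (h x)
  constructor <;> linarith

lemma two_mul_abs_mul_le_of_sq_le {a b Q S : ℝ} (ha : 0 ≤ a) (hb : 0 ≤ b) (hQ : 0 ≤ Q)
    (h : S ^ 2 ≤ a * b * Q) (v : ℝ) : 2 * |v * S| ≤ a * Q + b * v ^ 2 := by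
  refine (pow_le_pow_iff_left₀ (by positivity) (by positivity) two_ne_zero).mp ?_
  rw [mul_pow, sq_abs, mul_pow]
  nlinarith [sq_nonneg (a * Q - b * v ^ 2), mul_le_mul_of_nonneg_left h (sq_nonneg v)]

lemma abs_two_mul_add_sq_sub_le {m Q S : ℝ} (hm : 0 ≤ m) (hQ : 0 ≤ Q) (hS : S ^ 2 ≤ m * Q)
    (v : ℝ) : |2 * v * S + v ^ 2 - Q| ≤ √(m + 1) * (Q + v ^ 2) := by
  set t := √(m + 1)
  have ht : 1 ≤ t := Real.one_le_sqrt.mpr (by linarith)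
  have hS' : S ^ 2 ≤ (t + 1) * (t - 1) * Q := by
    rwa [← sq_sub_sq, one_pow, Real.sq_sqrt (by linarith), add_sub_cancel_right]
  have h₁ := two_mul_abs_mul_le_of_sq_le (by linarith) (by linarith) hQ hS' v
  have h₂ := two_mul_abs_mul_le_of_sq_le (by linarith) (by linarith) hQ
    (by rwa [mul_comm (t - 1)] : S ^ 2 ≤ (t - 1) * (t + 1) * Q) v
  rw [abs_le]
  constructor <;> linarith [neg_abs_le (v * S), le_abs_self (v * S)]

noncomputable def sharpDiag (m : ℕ) : ℝ := √(m / (m + 1))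

noncomputable def sharpCoupling (m : ℕ) : ℝ := 1 / √(m * (m + 1))

lemma sharpDiag_sq (m : ℕ) : sharpDiag m ^ 2 = 1 - 1 / (m + 1) := by
  rw [sharpDiag, Real.sq_sqrt (by positivity)]
  field_simp
  ring

lemma sharpDiag_mul_sharpCoupling {m : ℕ} (hm : m ≠ 0) :
    sharpDiag m * sharpCoupling m = 1 / (m + 1) := by
  rw [sharpDiag, sharpCoupling, mul_one_div, ← Real.sqrt_div' _ (by positivity),
    show (m : ℝ) / (m + 1) / (m * (m + 1)) = (1 / (m + 1)) ^ 2 by field_simp,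
    Real.sqrt_sq (by positivity)]

lemma natCast_mul_sharpCoupling_sq {m : ℕ} (hm : m ≠ 0) :
    m * sharpCoupling m ^ 2 = 1 / (m + 1) := by
  rw [sharpCoupling, div_pow, Real.sq_sqrt (by positivity)]
  field_simp

section SharpMatrix

variable {ι : Type*} [Fintype ι] [DecidableEq ι]

noncomputable def sharpMatrix (M : Finset ι) (L : ι) : Matrix ι ι ℝ :=
  diagonal (fun i => if i ∈ M then sharpDiag #M else 1) +
    vecMulVec (fun l => if l ∈ M then sharpCoupling #M else 0) (Pi.single L 1)

variable (M : Finset ι) (L : ι)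

lemma sharpMatrix_mulVec_apply (x : ι → ℝ) (l : ι) :
    (sharpMatrix M L *ᵥ x) l =
      if l ∈ M then sharpDiag #M * x l + sharpCoupling #M * x L else x l := by
  simp only [sharpMatrix, add_mulVec, vecMulVec_mulVec, single_dotProduct, one_mul,
    op_smul_eq_smul, Pi.add_apply, mulVec_diagonal, ite_mul, Pi.smul_apply, smul_eq_mul, mul_ite,
    mul_zero]
  split_ifs <;> ring

lemma sharpMatrix_transpose_mulVec_apply (r : ι → ℝ) (i : ι) :
    ((sharpMatrix M L)ᵀ *ᵥ r) i =
      (if i ∈ M then sharpDiag #M else 1) * r i +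
        if i = L then sharpCoupling #M * ∑ l ∈ M, r l else 0 := by
  simp [sharpMatrix, add_mulVec, mulVec_diagonal, vecMulVec_mulVec, dotProduct, Pi.single_apply,
    mul_sum]

variable {M L}

lemma sum_sq_sharpMatrix_mulVec (hM : M.Nonempty) (x : ι → ℝ) :
    ∑ l, (sharpMatrix M L *ᵥ x) l ^ 2 =
      ∑ l, x l ^ 2 + (2 * x L * ∑ l ∈ M, x l + x L ^ 2 - ∑ l ∈ M, x l ^ 2) / (#M + 1) := by
  have hm : #M ≠ 0 := hM.card_pos.ne'
  have hin : ∑ l ∈ M, (sharpMatrix M L *ᵥ x) l ^ 2 =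
      ∑ l ∈ M, (sharpDiag #M * x l + sharpCoupling #M * x L) ^ 2 :=
    sum_congr rfl fun l hl => by rw [sharpMatrix_mulVec_apply, if_pos hl]
  have hout : ∑ l ∈ Mᶜ, (sharpMatrix M L *ᵥ x) l ^ 2 = ∑ l ∈ Mᶜ, x l ^ 2 :=
    sum_congr rfl fun l hl => by rw [sharpMatrix_mulVec_apply, if_neg (mem_compl.mp hl)]
  have hexpand : ∑ l ∈ M, (sharpDiag #M * x l + sharpCoupling #M * x L) ^ 2 =
      sharpDiag #M ^ 2 * ∑ l ∈ M, x l ^ 2 +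
        2 * (sharpDiag #M * sharpCoupling #M) * x L * ∑ l ∈ M, x l +
          #M * sharpCoupling #M ^ 2 * x L ^ 2 := by
    rw [sum_congr rfl fun l _ => (by ring :
      (sharpDiag #M * x l + sharpCoupling #M * x L) ^ 2 = sharpDiag #M ^ 2 * x l ^ 2 +
        2 * (sharpDiag #M * sharpCoupling #M) * x L * x l + sharpCoupling #M ^ 2 * x L ^ 2),
      sum_add_distrib, sum_add_distrib, ← mul_sum, ← mul_sum, sum_const, nsmul_eq_mul]
    ring
  rw [← sum_add_sum_compl M, ← sum_add_sum_compl M (fun l => x l ^ 2), hin, hout, hexpand,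
    sharpDiag_sq, sharpDiag_mul_sharpCoupling hm, natCast_mul_sharpCoupling_sq hm]
  ring

lemma abs_sum_sq_sharpMatrix_mulVec_sub_le (hM : M.Nonempty) (hL : L ∉ M) (x : ι → ℝ) :
    |∑ l, (sharpMatrix M L *ᵥ x) l ^ 2 - ∑ l, x l ^ 2| ≤ 1 / √(#M + 1) * ∑ l, x l ^ 2 := by
  have hQ : 0 ≤ ∑ l ∈ M, x l ^ 2 := sum_nonneg fun l _ => sq_nonneg (x l)
  have hS := sq_sum_le_card_mul_sum_sq (s := M) (f := x)
  have hQv : ∑ l ∈ M, x l ^ 2 + x L ^ 2 ≤ ∑ l, x l ^ 2 := by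
    rw [add_comm, ← sum_insert hL (f := fun l => x l ^ 2)]
    exact sum_le_univ_sum_of_nonneg fun l => sq_nonneg (x l)
  have key := abs_two_mul_add_sq_sub_le (Nat.cast_nonneg #M) hQ hS (x L)
  have hm : (0 : ℝ) < #M + 1 := by positivity
  rw [sum_sq_sharpMatrix_mulVec hM, add_sub_cancel_left, abs_div, abs_of_pos hm]
  calc _ ≤ √(#M + 1) * (∑ l ∈ M, x l ^ 2 + x L ^ 2) / (#M + 1) :=
        div_le_div_of_nonneg_right key hm.le
    _ ≤ √(#M + 1) * (∑ l, x l ^ 2) / (#M + 1) := by gcongr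
    _ = 1 / √(#M + 1) * ∑ l, x l ^ 2 := by
      field_simp
      rw [Real.sq_sqrt hm.le]

variable (M L) in
noncomputable def sharpExtremal : ι → ℝ :=
  fun i => if i ∈ M then 1 else if i = L then √(#M + 1) + 1 else 0

lemma sum_sq_sharpExtremal (hL : L ∉ M) :
    ∑ l, sharpExtremal M L l ^ 2 = #M + (√(#M + 1) + 1) ^ 2 := by
  rw [← sum_add_sum_compl M]
  simp [sharpExtremal, sum_ite_of_true, sum_ite_of_false, hL]

lemma sum_sq_sharpMatrix_mulVec_sharpExtremal (hM : M.Nonempty) (hL : L ∉ M) :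
    ∑ l, (sharpMatrix M L *ᵥ sharpExtremal M L) l ^ 2 =
      (1 + 1 / √(#M + 1)) * ∑ l, sharpExtremal M L l ^ 2 := by
  have hsum : ∑ l ∈ M, sharpExtremal M L l = #M := by simp [sharpExtremal, sum_ite_of_true]
  have hsum_sq : ∑ l ∈ M, sharpExtremal M L l ^ 2 = #M := by
    simp [sharpExtremal, sum_ite_of_true]
  have hL' : sharpExtremal M L L = √(#M + 1) + 1 := by simp [sharpExtremal, hL]
  rw [sum_sq_sharpMatrix_mulVec hM, sum_sq_sharpExtremal hL, hsum, hsum_sq, hL']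
  set t := √((#M : ℝ) + 1) with ht
  have ht0 : 0 < t := Real.sqrt_pos.mpr (by positivity)
  have hm : (#M : ℝ) = t ^ 2 - 1 := by
    rw [ht, Real.sq_sqrt (by positivity)]
    ring
  rw [hm]
  field_simp
  ring

lemma sharpMatrix_transpose_mulVec_mulVec_indicator (hM : M.Nonempty) (hL : L ∉ M) (i : ι) :
    ((sharpMatrix M L)ᵀ *ᵥ (sharpMatrix M L *ᵥ fun l => if l ∈ M then 1 else 0)) i =
      if i ∈ M ∨ i = L then (#M : ℝ) / (#M + 1) else 0 := by
  have hm : #M ≠ 0 := hM.card_pos.ne'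
  have hAx : (sharpMatrix M L *ᵥ fun l => if l ∈ M then 1 else 0) =
      fun l => if l ∈ M then sharpDiag #M else 0 := by
    ext l
    rw [sharpMatrix_mulVec_apply, if_neg hL]
    split_ifs <;> simp
  rw [hAx, sharpMatrix_transpose_mulVec_apply, sum_ite_of_true fun _ h => h, sum_const,
    nsmul_eq_mul]
  by_cases hiM : i ∈ M
  · have hiL : i ≠ L := fun h => hL (h ▸ hiM)
    rw [if_pos hiM, if_pos hiM, if_neg hiL, if_pos (Or.inl hiM), add_zero, ← sq, sharpDiag_sq]
    field_simp
    ring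
  · by_cases hiL : i = L
    · rw [if_neg hiM, if_neg hiM, if_pos hiL, if_pos (Or.inr hiL), mul_zero, zero_add]
      linear_combination (#M : ℝ) * sharpDiag_mul_sharpCoupling hm
    · rw [if_neg hiM, if_neg hiM, if_neg hiL, if_neg (by tauto), mul_zero, add_zero]

end SharpMatrix

lemma rip_sharpMatrix {n : ℕ} {M : Finset (Fin n)} {L : Fin n} (hM : M.Nonempty) (hL : L ∉ M)
    (k : ℕ) : RIP (sharpMatrix M L) k (1 / √(#M + 1)) :=
  RIP.of_abs_sub_le_s8 (abs_sum_sq_sharpMatrix_mulVec_sub_le hM hL) k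

lemma le_of_rip_sharpMatrix {n : ℕ} {M : Finset (Fin n)} {L : Fin n} (hM : M.Nonempty)
    (hL : L ∉ M) {k : ℕ} (hk : #M + 1 ≤ k) {δ : ℝ} (h : RIP (sharpMatrix M L) k δ) :
    1 / √(#M + 1) ≤ δ := by
  have hsupp : ∀ i ∉ insert L M, sharpExtremal M L i = 0 := fun i hi => by
    rw [mem_insert, not_or] at hi
    rw [sharpExtremal, if_neg hi.2, if_neg hi.1]
  have hpos : 0 < ∑ l, sharpExtremal M L l ^ 2 := by
    rw [sum_sq_sharpExtremal hL]; positivity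
  have hupper := (h _ ⟨_, (card_insert_of_notMem hL).trans_le hk, hsupp⟩).2
  rw [sum_sq_sharpMatrix_mulVec_sharpExtremal hM hL] at hupper
  linarith [le_of_mul_le_mul_right hupper hpos]

/-- Sharpness: for any `k > g ≥ 0` and `b ≥ 0`, there exist a matrix `A` with restricted
isometry constant of order `k+b+1` exactly `1/√(k−g+1)`, a `k`-sparse `x̄` with support
`T`, `|T| = k`, and a prior support `T₀` with `|T∩T₀| = g`, `|T₀\T| = b`, such that the
first OMP residual `r⁰ = (I − P_{T₀})Ax̄` satisfies
`|⟨Ae_i, r⁰⟩| = (k−g)/(k−g+1)` both for all `i ∈ T\T₀` and for all `i ∉ T∪T₀`; hence the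
algorithm may fail to select an index of `T\T₀` in the first iteration. -/
theorem stmt8 (k g b : ℕ) (hg : g < k) :
    ∃ (A : Matrix (Fin (k + b + 1)) (Fin (k + b + 1)) ℝ)
      (xb : Fin (k + b + 1) → ℝ) (T T₀ : Finset (Fin (k + b + 1)))
      (r0 : Fin (k + b + 1) → ℝ),
      RIP A (k + b + 1) (1 / Real.sqrt ((k : ℝ) - g + 1)) ∧
      (∀ δ : ℝ, RIP A (k + b + 1) δ → 1 / Real.sqrt ((k : ℝ) - g + 1) ≤ δ) ∧
      (∀ i, xb i ≠ 0 ↔ i ∈ T) ∧ T.card = k ∧ (T ∩ T₀).card = g ∧ (T₀ \ T).card = b ∧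
      (∃ w : Fin (k + b + 1) → ℝ, (∀ i ∉ T₀, w i = 0) ∧
        r0 = A.mulVec xb - A.mulVec w ∧ ∀ i ∈ T₀, (∑ l, A l i * r0 l) = 0) ∧
      (∀ i ∈ T \ T₀, |∑ l, A l i * r0 l| = ((k : ℝ) - g) / ((k : ℝ) - g + 1)) ∧
      (∀ i ∉ T ∪ T₀, |∑ l, A l i * r0 l| = ((k : ℝ) - g) / ((k : ℝ) - g + 1)) := by
  obtain ⟨T, T₀, hT, hTT₀, hT₀T, hlast⟩ :=
    Fin.exists_finsets_card_inter_card_sdiff (b := b) hg.le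
  have hMcard : #(T \ T₀) = k - g := by rw [card_sdiff, inter_comm, hT, hTT₀]
  have hM : (T \ T₀).Nonempty := card_pos.mp (by omega)
  have hL : Fin.last (k + b) ∉ T ∪ T₀ := (hlast _).mpr rfl
  have hLM : Fin.last (k + b) ∉ T \ T₀ := fun h => hL (mem_union_left _ (mem_sdiff.mp h).1)
  set A := sharpMatrix (T \ T₀) (Fin.last (k + b))
  let r0 := A *ᵥ fun l => if l ∈ T \ T₀ then 1 else 0
  have hcorr : ∀ i, ∑ l, A l i * r0 l =
      if i ∈ T \ T₀ ∨ i = Fin.last (k + b) then (#(T \ T₀) : ℝ) / (#(T \ T₀) + 1) else 0 :=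
    sharpMatrix_transpose_mulVec_mulVec_indicator hM hLM
  have hind : (fun l => if l ∈ T \ T₀ then (1 : ℝ) else 0) =
      (fun l => if l ∈ T then 1 else 0) - fun l => if l ∈ T ∩ T₀ then 1 else 0 := by
    ext i
    by_cases hi : i ∈ T <;> by_cases hi₀ : i ∈ T₀ <;> simp [hi, hi₀]
  rw [← show (#(T \ T₀) : ℝ) = k - g by rw [hMcard, Nat.cast_sub hg.le]]
  refine ⟨A, fun l => if l ∈ T then 1 else 0, T, T₀, r0, rip_sharpMatrix hM hLM _,
    fun δ => le_of_rip_sharpMatrix hM hLM (by omega), fun i => by simp, hT, hTT₀, hT₀T,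
    ⟨_, fun i hi => if_neg fun h => hi (mem_inter.mp h).2,
      by rw [← mulVec_sub, ← hind], fun i hi => ?_⟩,
    fun i hi => ?_, fun i hi => ?_⟩
  · rw [hcorr, if_neg]
    rintro (h | rfl)
    exacts [(mem_sdiff.mp h).2 hi, hL (mem_union_right _ hi)]
  · rw [hcorr, if_pos (Or.inl hi), abs_of_nonneg (by positivity)]
  · rw [hcorr, if_pos (Or.inr ((hlast i).mp hi)), abs_of_nonneg (by positivity)]
end

section
/- (Support recovery under noise) Let y = Ax + v with ‖v‖₂ ≤ ε, x k-sparse with support T, |T| = k, prior support T₀ with |T∩T₀| = g < k, |T₀\T| = b. If δ_{k+b+1} < 1/√(k−g+1) and min_{i ∈ T\T₀} |x_i| > max{ √(2(1+δ_{k+b+1})) ε / (1 − √(k−g+1) δ_{k+b+1}), 2ε/√(1−δ_{k+b+1}) }, then OMP_{T₀} with stopping rule ‖r^t‖₂ ≤ ε selects exactly the indices of T\T₀ in exactly k−g iterations. -/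
/-!
At every iteration the residual is `A u + v`, where `u = x - x̂` is supported on `T ∪ T₀` and
agrees with `x` on the still missing indices `S = T \ Λ`. If the most correlated column `j` were
not in `S`, the test vector `h = u - √|S| ‖u_S‖ sign⟪A eⱼ, r⟫ eⱼ` would satisfy `⟪A h, r⟫ ≤ 0`
(Cauchy–Schwarz on `S`), whereas the polarized restricted isometry bound
`⟪A p, A q⟫ ≥ ⟪p, q⟫ - δ ‖p‖ ‖q‖`, together with `‖h‖ ≤ √(|S| + 1) ‖u‖` and the amplitude bound
on `x`, makes `⟪A h, r⟫ > 0`. So each step picks a new index of `T \ T₀`. While one is missing,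
the lower isometry bound keeps `‖r‖ > ε`; once `T ⊆ Λ`, the residual is orthogonal to `A u` and
hence no longer than `v`.
-/

open scoped BigOperators

open Finset Real
open scoped InnerProductSpace

section RestrictedIsometry

variable {E F : Type*} [NormedAddCommGroup E] [InnerProductSpace ℝ E]
  [NormedAddCommGroup F] [InnerProductSpace ℝ F]

def RestrictedIsometryOn (A : E →ₗ[ℝ] F) (W : Submodule ℝ E) (δ : ℝ) : Prop :=
  ∀ w ∈ W, (1 - δ) * ‖w‖ ^ 2 ≤ ‖A w‖ ^ 2 ∧ ‖A w‖ ^ 2 ≤ (1 + δ) * ‖w‖ ^ 2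

namespace RestrictedIsometryOn

variable {A : E →ₗ[ℝ] F} {W : Submodule ℝ E} {δ : ℝ}

lemma nonneg (hA : RestrictedIsometryOn A W δ) {w : E} (hw : w ∈ W) (hw0 : w ≠ 0) : 0 ≤ δ := by
  obtain ⟨hlow, hup⟩ := hA w hw
  have : 0 < ‖w‖ ^ 2 := by positivity
  nlinarith

lemma sqrt_one_sub_mul_norm_le (hA : RestrictedIsometryOn A W δ) {w : E} (hw : w ∈ W) :
    √(1 - δ) * ‖w‖ ≤ ‖A w‖ := by
  rw [← sqrt_sq (norm_nonneg w), ← sqrt_mul' _ (sq_nonneg _), ← sqrt_sq (norm_nonneg (A w))]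
  exact sqrt_le_sqrt (hA w hw).1

lemma norm_map_le (hA : RestrictedIsometryOn A W δ) {w : E} (hw : w ∈ W) :
    ‖A w‖ ≤ √(1 + δ) * ‖w‖ := by
  rw [← sqrt_sq (norm_nonneg w), ← sqrt_mul' _ (sq_nonneg _), ← sqrt_sq (norm_nonneg (A w))]
  exact sqrt_le_sqrt (hA w hw).2

lemma inner_sub_half_mul_le_inner_map (hA : RestrictedIsometryOn A W δ) {p q : E} (hp : p ∈ W)
    (hq : q ∈ W) : ⟪p, q⟫_ℝ - δ / 2 * (‖p‖ ^ 2 + ‖q‖ ^ 2) ≤ ⟪A p, A q⟫_ℝ := by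
  have hadd := (hA (p + q) (W.add_mem hp hq)).1
  have hsub := (hA (p - q) (W.sub_mem hp hq)).2
  rw [map_add, norm_add_sq_real, norm_add_sq_real] at hadd
  rw [map_sub, norm_sub_sq_real, norm_sub_sq_real] at hsub
  linarith

lemma inner_sub_le_inner_map (hA : RestrictedIsometryOn A W δ) {p q : E} (hp : p ∈ W)
    (hq : q ∈ W) : ⟪p, q⟫_ℝ - δ * (‖p‖ * ‖q‖) ≤ ⟪A p, A q⟫_ℝ := by
  rcases eq_or_ne p 0 with rfl | hp0
  · simp
  rcases eq_or_ne q 0 with rfl | hq0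
  · simp
  have hpq : 0 < ‖p‖ * ‖q‖ := by positivity
  have hscaled := hA.inner_sub_half_mul_le_inner_map (W.smul_mem ‖q‖ hp) (W.smul_mem ‖p‖ hq)
  simp only [map_smul, real_inner_smul_left, real_inner_smul_right, norm_smul, norm_norm] at hscaled
  refine le_of_mul_le_mul_left ?_ hpq
  nlinarith

lemma inner_map_add_pos (hA : RestrictedIsometryOn A W δ) (hδ : 0 ≤ δ) {u h : E} (hu : u ∈ W)
    (hh : h ∈ W) {v : F} {c ε : ℝ} (hc : 0 ≤ c) (hv : ‖v‖ ≤ ε) (hhu : ⟪h, u⟫_ℝ = ‖u‖ ^ 2)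
    (hhc : ‖h‖ ≤ c * ‖u‖) (hmargin : c * √(1 + δ) * ε < (1 - c * δ) * ‖u‖) :
    0 < ⟪A h, A u + v⟫_ℝ := by
  have hε : 0 ≤ ε := (norm_nonneg v).trans hv
  have hpos : 0 < (1 - c * δ) * ‖u‖ := lt_of_le_of_lt (by positivity) hmargin
  have hu0 : 0 < ‖u‖ := pos_of_mul_pos_right hpos (pos_of_mul_pos_left hpos (norm_nonneg u)).le
  have hmain : ‖u‖ ^ 2 - δ * (c * ‖u‖ * ‖u‖) ≤ ⟪A h, A u⟫_ℝ := by
    have := hA.inner_sub_le_inner_map hh hu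
    rw [hhu] at this
    nlinarith [mul_le_mul_of_nonneg_right hhc (norm_nonneg u)]
  have hnoise : -(√(1 + δ) * (c * ‖u‖) * ε) ≤ ⟪A h, v⟫_ℝ := by
    have hAh : ‖A h‖ ≤ √(1 + δ) * (c * ‖u‖) :=
      (hA.norm_map_le hh).trans (mul_le_mul_of_nonneg_left hhc (sqrt_nonneg _))
    have := mul_le_mul hAh hv (norm_nonneg v) (by positivity)
    linarith [neg_abs_le ⟪A h, v⟫_ℝ, abs_real_inner_le_norm (A h) v]
  rw [inner_add_right]
  nlinarith [mul_lt_mul_of_pos_left hmargin hu0]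

end RestrictedIsometryOn

end RestrictedIsometry

lemma sum_mul_le_sqrt_card_mul_sqrt_sum_sq_mul {ι : Type*} (S : Finset ι) (w c : ι → ℝ) {M : ℝ}
    (hc : ∀ i ∈ S, |c i| ≤ M) : ∑ i ∈ S, w i * c i ≤ √(#S) * √(∑ i ∈ S, w i ^ 2) * M := by
  have hM : ∑ i ∈ S, w i * c i ≤ (∑ i ∈ S, |w i|) * M := by
    rw [sum_mul]
    refine sum_le_sum fun i hi => (le_abs_self _).trans ?_
    rw [abs_mul]
    exact mul_le_mul_of_nonneg_left (hc i hi) (abs_nonneg _)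
  have hCS : ∑ i ∈ S, |w i| ≤ √(#S) * √(∑ i ∈ S, w i ^ 2) := by
    rw [← sqrt_mul (Nat.cast_nonneg _)]
    refine le_sqrt_of_sq_le ?_
    simpa only [sq_abs] using sq_sum_le_card_mul_sum_sq (s := S) (f := fun i => |w i|)
  rcases S.eq_empty_or_nonempty with rfl | ⟨i, hi⟩
  · simp
  have hM0 : 0 ≤ M := (abs_nonneg _).trans (hc i hi)
  exact hM.trans (mul_le_mul_of_nonneg_right hCS hM0)

lemma card_sdiff_add_card_of_subset_of_subset_union {ι : Type*} [DecidableEq ι]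
    {s t u : Finset ι} (hsu : s ⊆ u) (hut : u ⊆ t ∪ s) : #(t \ u) + #u = #(t \ s) + #s := by
  have htu : t \ u = (t ∪ s) \ u := by
    ext i; simp only [mem_sdiff, mem_union]; constructor
    · exact fun ⟨hi, hiu⟩ => ⟨Or.inl hi, hiu⟩
    · rintro ⟨hi | hi, hiu⟩
      · exact ⟨hi, hiu⟩
      · exact absurd (hsu hi) hiu
  rw [htu, card_sdiff_add_card_eq_card hut, card_sdiff_add_card, union_comm]

lemma sqrt_card_add_one_mul_lt_of_lt_abs {ι : Type*} {S : Finset ι} (hS : S.Nonempty) {N δ ε : ℝ}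
    (hSN : (#S : ℝ) ≤ N) (hδ : 0 ≤ δ) (hNδ : √(N + 1) * δ < 1) (hε : 0 ≤ ε) {x : ι → ℝ}
    (hx : ∀ i ∈ S, √(2 * (1 + δ)) * ε / (1 - √(N + 1) * δ) < |x i|) :
    √(#S + 1) * √(1 + δ) * ε < (1 - √(#S + 1) * δ) * √(∑ i ∈ S, x i ^ 2) := by
  set θ := √(2 * (1 + δ)) * ε / (1 - √(N + 1) * δ) with hθ
  have hNδ' : 0 < 1 - √(N + 1) * δ := by linarith
  have hθ0 : 0 ≤ θ := by positivity
  have hsum : #S * θ ^ 2 < ∑ i ∈ S, x i ^ 2 := by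
    have h := sum_lt_sum_of_nonempty hS fun i hi => pow_lt_pow_left₀ (hx i hi) hθ0 two_ne_zero
    rwa [sum_const, nsmul_eq_mul, sum_congr rfl fun i _ => sq_abs (x i)] at h
  have hsqrt : √(#S) * θ < √(∑ i ∈ S, x i ^ 2) := by
    rw [← sqrt_sq hθ0, ← sqrt_mul (Nat.cast_nonneg _)]
    exact sqrt_lt_sqrt (by positivity) hsum
  have hcoef : 1 - √(N + 1) * δ ≤ 1 - √(#S + 1) * δ := by
    gcongr
  have hcard : √(#S + 1) ≤ √2 * √(#S) := by
    rw [← sqrt_mul zero_le_two]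
    have : (1 : ℝ) ≤ #S := by exact_mod_cast card_pos.2 hS
    exact sqrt_le_sqrt (by linarith)
  calc √(#S + 1) * √(1 + δ) * ε ≤ √(#S) * (√(2 * (1 + δ)) * ε) := by
        rw [sqrt_mul zero_le_two]
        nlinarith [mul_le_mul_of_nonneg_right hcard (by positivity : 0 ≤ √(1 + δ) * ε)]
    _ = (1 - √(N + 1) * δ) * (√(#S) * θ) := by
        rw [hθ, mul_comm (1 - _), mul_assoc, div_mul_cancel₀ _ hNδ'.ne']
    _ ≤ (1 - √(#S + 1) * δ) * (√(#S) * θ) := by gcongr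
    _ < (1 - √(#S + 1) * δ) * √(∑ i ∈ S, x i ^ 2) := by
        gcongr
        linarith

lemma map_add_sub_map {E F : Type*} [AddCommGroup E] [AddCommGroup F] [Module ℝ E] [Module ℝ F]
    (A : E →ₗ[ℝ] F) (x x' : E) (v : F) : A x + v - A x' = A (x - x') + v := by
  rw [map_sub]; abel

section Coordinates

variable {ι F : Type*} [NormedAddCommGroup F] [InnerProductSpace ℝ F]

def supportedOn (s : Finset ι) : Submodule ℝ (EuclideanSpace ℝ ι) where
  carrier := {w | ∀ i ∉ s, w i = 0}
  zero_mem' _ _ := rfl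
  add_mem' hw hw' i hi := by simp [hw i hi, hw' i hi]
  smul_mem' c w hw i hi := by simp [hw i hi]

lemma supportedOn_mono {s t : Finset ι} (hst : s ⊆ t) : supportedOn s ≤ supportedOn t :=
  fun _ hw i hi => hw i fun his => hi (hst his)

lemma single_mem_supportedOn [DecidableEq ι] {s : Finset ι} {i : ι} (hi : i ∈ s) (a : ℝ) :
    EuclideanSpace.single i a ∈ supportedOn s := by
  intro l hl
  simp [show l ≠ i from fun h => hl (h ▸ hi)]

lemma sum_sq_le_norm_sq [Fintype ι] (u : EuclideanSpace ℝ ι) (S : Finset ι) :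
    ∑ i ∈ S, u i ^ 2 ≤ ‖u‖ ^ 2 := by
  rw [EuclideanSpace.norm_sq_eq]
  simpa using sum_le_univ_sum_of_nonneg (s := S) (f := fun i => u i ^ 2) fun i => sq_nonneg _

noncomputable def correlation [DecidableEq ι] (A : EuclideanSpace ℝ ι →ₗ[ℝ] F) (r : F) (i : ι) :
    ℝ :=
  ⟪A (EuclideanSpace.single i 1), r⟫_ℝ

lemma inner_map_eq_sum_mul_correlation [Fintype ι] [DecidableEq ι]
    (A : EuclideanSpace ℝ ι →ₗ[ℝ] F) (h : EuclideanSpace ℝ ι) (r : F) :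
    ⟪A h, r⟫_ℝ = ∑ i, h i * correlation A r i := by
  conv_lhs => rw [← (EuclideanSpace.basisFun ι ℝ).sum_repr h]
  simp [correlation, sum_inner, real_inner_smul_left]

end Coordinates

section Selection

variable {ι F : Type*} [Fintype ι] [DecidableEq ι] [NormedAddCommGroup F] [InnerProductSpace ℝ F]
  {A : EuclideanSpace ℝ ι →ₗ[ℝ] F} {Ω S : Finset ι} {u : EuclideanSpace ℝ ι} {r : F} {j : ι}

lemma exists_inner_map_nonpos_of_notMem (hu : u ∈ supportedOn Ω) (hjS : j ∉ S)
    (hcorr : ∀ i ∈ Ω \ S, correlation A r i = 0)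
    (hj : ∀ i, |correlation A r i| ≤ |correlation A r j|) :
    ∃ h ∈ supportedOn (insert j Ω), ⟪h, u⟫_ℝ = ‖u‖ ^ 2 ∧ ‖h‖ ≤ √(#S + 1) * ‖u‖ ∧
      ⟪A h, r⟫_ℝ ≤ 0 := by
  have hsum : ⟪A u, r⟫_ℝ = ∑ i ∈ S, u i * correlation A r i := by
    rw [inner_map_eq_sum_mul_correlation]
    refine (sum_subset (subset_univ S) fun i _ hiS => ?_).symm
    by_cases hiΩ : i ∈ Ω
    · rw [hcorr i (mem_sdiff.2 ⟨hiΩ, hiS⟩), mul_zero]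
    · rw [hu i hiΩ, zero_mul]
  by_cases hjΩ : j ∈ Ω
  · have hcj : correlation A r j = 0 := hcorr j (mem_sdiff.2 ⟨hjΩ, hjS⟩)
    have hzero : ∀ i, correlation A r i = 0 := fun i =>
      abs_nonpos_iff.1 (by simpa [hcj] using hj i)
    refine ⟨u, supportedOn_mono (subset_insert j Ω) hu, real_inner_self_eq_norm_sq u, ?_, ?_⟩
    · exact le_mul_of_one_le_left (norm_nonneg u) (one_le_sqrt.2 (by simp))
    · simp [inner_map_eq_sum_mul_correlation, hzero]
  set γ := √(#S) * √(∑ i ∈ S, u i ^ 2) with hγ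
  obtain ⟨s, hs, hsc⟩ : ∃ s : ℝ, |s| = 1 ∧ s * correlation A r j = |correlation A r j| := by
    rcases abs_choice (correlation A r j) with h | h
    · exact ⟨1, by simp, by simp [h]⟩
    · exact ⟨-1, by simp, by simp [h]⟩
  have huj : ⟪EuclideanSpace.single j (1 : ℝ), u⟫_ℝ = 0 := by
    simp [EuclideanSpace.inner_single_left, hu j hjΩ]
  refine ⟨u - (γ * s) • EuclideanSpace.single j 1,
    (supportedOn _).sub_mem (supportedOn_mono (subset_insert j Ω) hu)
      ((supportedOn _).smul_mem _ (single_mem_supportedOn (mem_insert_self j Ω) 1)), ?_, ?_, ?_⟩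
  · rw [inner_sub_left, real_inner_smul_left, huj, real_inner_self_eq_norm_sq, mul_zero, sub_zero]
  · have hγ2 : γ ^ 2 ≤ #S * ‖u‖ ^ 2 := by
      rw [hγ, mul_pow, sq_sqrt (Nat.cast_nonneg _), sq_sqrt (sum_nonneg fun i _ => sq_nonneg _)]
      exact mul_le_mul_of_nonneg_left (sum_sq_le_norm_sq u S) (Nat.cast_nonneg _)
    rw [← sqrt_sq (norm_nonneg u), ← sqrt_mul (by positivity)]
    refine le_sqrt_of_sq_le ?_
    rw [norm_sub_sq_real, real_inner_smul_right, real_inner_comm, huj, norm_smul]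
    simp only [PiLp.norm_single, norm_one, mul_one, Real.norm_eq_abs, abs_mul, hs, sq_abs]
    nlinarith
  · rw [map_sub, map_smul, inner_sub_left, real_inner_smul_left, hsum, mul_assoc]
    change _ - γ * (s * correlation A r j) ≤ 0
    rw [hsc, sub_nonpos]
    exact sum_mul_le_sqrt_card_mul_sqrt_sum_sq_mul S _ _ fun i _ => hj i

theorem mem_of_abs_correlation_le {δ ε : ℝ} {v : F}
    (hA : RestrictedIsometryOn A (supportedOn (insert j Ω)) δ) (hδ : 0 ≤ δ)
    (hu : u ∈ supportedOn Ω) (hv : ‖v‖ ≤ ε)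
    (hcorr : ∀ i ∈ Ω \ S, correlation A (A u + v) i = 0)
    (hmargin : √(#S + 1) * √(1 + δ) * ε < (1 - √(#S + 1) * δ) * √(∑ i ∈ S, u i ^ 2))
    (hj : ∀ i, |correlation A (A u + v) i| ≤ |correlation A (A u + v) j|) : j ∈ S := by
  by_contra hjS
  obtain ⟨h, hh, hhu, hhc, hneg⟩ := exists_inner_map_nonpos_of_notMem hu hjS hcorr hj
  have hpos : 0 < (1 - √(#S + 1) * δ) * √(∑ i ∈ S, u i ^ 2) :=
    lt_of_le_of_lt (by have := (norm_nonneg v).trans hv; positivity) hmargin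
  have hmargin' : √(#S + 1) * √(1 + δ) * ε < (1 - √(#S + 1) * δ) * ‖u‖ :=
    hmargin.trans_le <| mul_le_mul_of_nonneg_left
      ((sqrt_le_sqrt (sum_sq_le_norm_sq u S)).trans_eq (sqrt_sq (norm_nonneg u)))
      (pos_of_mul_pos_left hpos (sqrt_nonneg _)).le
  have hpos' := hA.inner_map_add_pos hδ (supportedOn_mono (subset_insert j Ω) hu) hh
    (sqrt_nonneg _) hv hhu hhc hmargin'
  exact hneg.not_gt hpos'

end Selection

section OMP

variable {ι F : Type*} [DecidableEq ι] [NormedAddCommGroup F] [InnerProductSpace ℝ F]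

/-- The least-squares estimate `xe t` on `Λ t` is encoded by its normal equations: the residual is
orthogonal to every selected column. -/
structure IsOMPTrace (A : EuclideanSpace ℝ ι →ₗ[ℝ] F) (y : F) (T₀ : Finset ι)
    (Λ : ℕ → Finset ι) (j : ℕ → ι) (xe : ℕ → EuclideanSpace ℝ ι) : Prop where
  init : Λ 0 = T₀
  estimate_mem : ∀ t, xe t ∈ supportedOn (Λ t)
  correlation_eq_zero : ∀ t, ∀ i ∈ Λ t, correlation A (y - A (xe t)) i = 0
  abs_correlation_le : ∀ t i,
    |correlation A (y - A (xe t)) i| ≤ |correlation A (y - A (xe t)) (j (t + 1))|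
  succ : ∀ t, Λ (t + 1) = insert (j (t + 1)) (Λ t)

namespace IsOMPTrace

variable {A : EuclideanSpace ℝ ι →ₗ[ℝ] F} {x : EuclideanSpace ℝ ι} {v : F} {T T₀ : Finset ι}
  {Λ : ℕ → Finset ι} {j : ℕ → ι} {xe : ℕ → EuclideanSpace ℝ ι} {δ ε : ℝ} {t : ℕ}

lemma sub_estimate_mem (hOMP : IsOMPTrace A (A x + v) T₀ Λ j xe) (hx : x ∈ supportedOn T)
    (hΛ : Λ t ⊆ T ∪ T₀) : x - xe t ∈ supportedOn (T ∪ T₀) :=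
  (supportedOn _).sub_mem (supportedOn_mono subset_union_left hx)
    (supportedOn_mono hΛ (hOMP.estimate_mem t))

theorem mem_sdiff_of_margin [Fintype ι] (hOMP : IsOMPTrace A (A x + v) T₀ Λ j xe)
    (hA : RestrictedIsometryOn A (supportedOn (insert (j (t + 1)) (T ∪ T₀))) δ) (hδ : 0 ≤ δ)
    (hx : x ∈ supportedOn T) (hv : ‖v‖ ≤ ε) (hT₀ : T₀ ⊆ Λ t) (hΛ : Λ t ⊆ T ∪ T₀)
    (hmargin : √(#(T \ Λ t) + 1) * √(1 + δ) * ε <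
      (1 - √(#(T \ Λ t) + 1) * δ) * √(∑ i ∈ T \ Λ t, x i ^ 2)) :
    j (t + 1) ∈ T \ Λ t := by
  have hxe : ∀ i ∉ Λ t, xe t i = 0 := hOMP.estimate_mem t
  refine mem_of_abs_correlation_le hA hδ (hOMP.sub_estimate_mem hx hΛ) hv (fun i hi => ?_) ?_ ?_
  · rw [← map_add_sub_map]
    refine hOMP.correlation_eq_zero t i ?_
    obtain ⟨hiT | hiT₀, hiS⟩ := mem_sdiff.1 hi |>.imp_left mem_union.1
    · by_contra hiΛ; exact hiS (mem_sdiff.2 ⟨hiT, hiΛ⟩)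
    · exact hT₀ hiT₀
  · have hsum : ∑ i ∈ T \ Λ t, (x - xe t) i ^ 2 = ∑ i ∈ T \ Λ t, x i ^ 2 :=
      sum_congr rfl fun i hi => by simp [hxe i (mem_sdiff.1 hi).2]
    rwa [hsum]
  · simpa only [← map_add_sub_map] using hOMP.abs_correlation_le t

theorem support_invariant [Fintype ι] (hOMP : IsOMPTrace A (A x + v) T₀ Λ j xe)
    (hA : ∀ i, RestrictedIsometryOn A (supportedOn (insert i (T ∪ T₀))) δ) (hδ : 0 ≤ δ)
    (hx : x ∈ supportedOn T) (hv : ‖v‖ ≤ ε)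
    (hmargin : ∀ S ⊆ T \ T₀, S.Nonempty →
      √(#S + 1) * √(1 + δ) * ε < (1 - √(#S + 1) * δ) * √(∑ i ∈ S, x i ^ 2)) :
    ∀ t ≤ #(T \ T₀), T₀ ⊆ Λ t ∧ Λ t ⊆ T ∪ T₀ ∧ #(Λ t) = #T₀ + t := by
  intro t
  induction t with
  | zero => exact fun _ => by simp [hOMP.init]
  | succ t ih =>
    intro ht
    obtain ⟨hT₀, hΛ, hcard⟩ := ih (by omega)
    have hS : (T \ Λ t).Nonempty := card_pos.1 <| by
      have := card_sdiff_add_card_of_subset_of_subset_union hT₀ hΛ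
      omega
    have hj := hOMP.mem_sdiff_of_margin (hA _) hδ hx hv hT₀ hΛ
      (hmargin _ (sdiff_subset_sdiff subset_rfl hT₀) hS)
    rw [hOMP.succ, card_insert_of_notMem (mem_sdiff.1 hj).2, hcard]
    exact ⟨hT₀.trans (subset_insert _ _), insert_subset (mem_union_left _ (mem_sdiff.1 hj).1) hΛ,
      rfl⟩

theorem lt_norm_residual [Fintype ι] (hOMP : IsOMPTrace A (A x + v) T₀ Λ j xe) {i : ι}
    (hA : RestrictedIsometryOn A (supportedOn (insert i (T ∪ T₀))) δ) (hx : x ∈ supportedOn T)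
    (hv : ‖v‖ ≤ ε) (hΛ : Λ t ⊆ T ∪ T₀) (hi : i ∉ Λ t) (hlarge : 2 * ε < √(1 - δ) * |x i|) :
    ε < ‖A x + v - A (xe t)‖ := by
  have hu := supportedOn_mono (subset_insert i _) (hOMP.sub_estimate_mem hx hΛ)
  have hxi : |x i| ≤ ‖x - xe t‖ := by
    simpa [hOMP.estimate_mem t i hi] using PiLp.norm_apply_le (x - xe t) i
  have hAu := (mul_le_mul_of_nonneg_left hxi (sqrt_nonneg _)).trans
    (hA.sqrt_one_sub_mul_norm_le hu)
  rw [map_add_sub_map]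
  linarith [norm_sub_le_norm_add (A (x - xe t)) v]

theorem norm_residual_le [Fintype ι] (hOMP : IsOMPTrace A (A x + v) T₀ Λ j xe)
    (hx : x ∈ supportedOn T) (hTΛ : T ⊆ Λ t) : ‖A x + v - A (xe t)‖ ≤ ‖v‖ := by
  have hu : x - xe t ∈ supportedOn (Λ t) :=
    (supportedOn _).sub_mem (supportedOn_mono hTΛ hx) (hOMP.estimate_mem t)
  have horth : ⟪A x + v - A (xe t), A (x - xe t)⟫_ℝ = 0 := by
    rw [real_inner_comm, inner_map_eq_sum_mul_correlation]
    refine sum_eq_zero fun i _ => ?_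
    by_cases hi : i ∈ Λ t
    · rw [hOMP.correlation_eq_zero t i hi, mul_zero]
    · rw [hu i hi, zero_mul]
  have hpyth := norm_sub_sq_eq_norm_sq_add_norm_sq_real horth
  rw [map_add_sub_map, add_sub_cancel_left] at hpyth
  rw [map_add_sub_map]
  exact (mul_self_le_mul_self_iff (norm_nonneg _) (norm_nonneg v)).2
    (hpyth ▸ le_add_of_nonneg_right (mul_self_nonneg _))

theorem exact_recovery [Fintype ι] (hOMP : IsOMPTrace A (A x + v) T₀ Λ j xe)
    (hA : ∀ i, RestrictedIsometryOn A (supportedOn (insert i (T ∪ T₀))) δ)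
    (hδ : √(#(T \ T₀) + 1) * δ < 1) (hx : x ∈ supportedOn T) (hv : ‖v‖ ≤ ε)
    (hmin : ∀ i ∈ T \ T₀, max (√(2 * (1 + δ)) * ε / (1 - √(#(T \ T₀) + 1) * δ))
      (2 * ε / √(1 - δ)) < |x i|) :
    (∀ t, 1 ≤ t → t ≤ #(T \ T₀) → j t ∈ T \ T₀) ∧
    (∀ t < #(T \ T₀), ε < ‖A x + v - A (xe t)‖) ∧ ‖A x + v - A (xe #(T \ T₀))‖ ≤ ε := by
  have hε : 0 ≤ ε := (norm_nonneg v).trans hv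
  have hδ0 : 0 ≤ δ :=
    (hA (j 0)).nonneg (single_mem_supportedOn (mem_insert_self _ _) 1) (by simp)
  have hδ1 : δ < 1 := by
    nlinarith [one_le_sqrt.2 (by simp : (1 : ℝ) ≤ #(T \ T₀) + 1)]
  have hinv := hOMP.support_invariant hA hδ0 hx hv fun S hS hne =>
    sqrt_card_add_one_mul_lt_of_lt_abs hne (by exact_mod_cast card_le_card hS) hδ0 hδ hε fun i hi =>
      (le_max_left _ _).trans_lt (hmin i (hS hi))
  refine ⟨?_, fun t ht => ?_, ?_⟩
  · rintro (_ | t) h1 ht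
    · omega
    obtain ⟨hT₀, -, hcard⟩ := hinv t (by omega)
    obtain ⟨-, hΛ, hcard'⟩ := hinv (t + 1) ht
    rw [hOMP.succ] at hΛ hcard'
    have hj : j (t + 1) ∉ Λ t := fun h => by rw [insert_eq_of_mem h] at hcard'; omega
    exact mem_sdiff.2 ⟨(mem_union.1 (hΛ (mem_insert_self _ _))).resolve_right (hj ∘ (hT₀ ·)),
      hj ∘ (hT₀ ·)⟩
  · obtain ⟨hT₀, hΛ, hcard⟩ := hinv t ht.le
    obtain ⟨i, hi⟩ : (T \ Λ t).Nonempty := card_pos.1 <| by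
      have := card_sdiff_add_card_of_subset_of_subset_union hT₀ hΛ
      omega
    refine hOMP.lt_norm_residual (hA i) hx hv hΛ (mem_sdiff.1 hi).2 ?_
    have := (le_max_right _ _).trans_lt (hmin i (sdiff_subset_sdiff subset_rfl hT₀ hi))
    rwa [div_lt_iff₀' (sqrt_pos.2 (by linarith))] at this
  · obtain ⟨hT₀, hΛ, hcard⟩ := hinv _ le_rfl
    have hTΛ : T \ Λ #(T \ T₀) = ∅ := card_eq_zero.1 <| by
      have := card_sdiff_add_card_of_subset_of_subset_union hT₀ hΛ
      omega
    exact (hOMP.norm_residual_le hx (sdiff_eq_empty_iff_subset.1 hTΛ)).trans hv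

end IsOMPTrace

end OMP

section Matrix

open WithLp Matrix

lemma norm_toLp_eq_sqrt_sum_sq {ι : Type*} [Fintype ι] (x : ι → ℝ) :
    ‖toLp 2 x‖ = √(∑ i, x i ^ 2) := by
  simp [EuclideanSpace.norm_eq]

variable {m n : ℕ} {A : Matrix (Fin m) (Fin n) ℝ}

lemma RIP.restrictedIsometryOn {K : ℕ} {δ : ℝ} (hA : RIP A K δ) {s : Finset (Fin n)}
    (hs : #s ≤ K) : RestrictedIsometryOn (toEuclideanLin A) (supportedOn s) δ := by
  intro w hw
  simpa [EuclideanSpace.norm_sq_eq] using hA (ofLp w) ⟨s, hs, hw⟩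

lemma correlation_toEuclideanLin (r : Fin m → ℝ) (i : Fin n) :
    correlation (toEuclideanLin A) (toLp 2 r) i = ∑ l, A l i * r l := by
  simp [correlation, PiLp.inner_apply, mul_comm]

lemma isOMPTrace_toEuclideanLin {y : Fin m → ℝ} {T₀ : Finset (Fin n)} {Λ : ℕ → Finset (Fin n)}
    {r : ℕ → Fin m → ℝ} {j : ℕ → Fin n} {xe : ℕ → Fin n → ℝ} (hΛ0 : Λ 0 = T₀)
    (hxe : ∀ t, (∀ i, i ∉ Λ t → xe t i = 0) ∧ r t = y - A.mulVec (xe t) ∧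
      (∀ i ∈ Λ t, (∑ l, A l i * r t l) = 0))
    (hj : ∀ t, 1 ≤ t → ∀ i, |∑ l, A l i * r (t - 1) l| ≤ |∑ l, A l (j t) * r (t - 1) l|)
    (hΛ : ∀ t, 1 ≤ t → Λ t = Λ (t - 1) ∪ {j t}) :
    IsOMPTrace (toEuclideanLin A) (toLp 2 y) T₀ Λ j (fun t => toLp 2 (xe t)) := by
  have hr : ∀ t, toLp 2 y - toEuclideanLin A (toLp 2 (xe t)) = toLp 2 (r t) := fun t => by
    rw [(hxe t).2.1]; rfl
  refine ⟨hΛ0, fun t => (hxe t).1, fun t i hi => ?_, fun t i => ?_, fun t => ?_⟩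
  · rw [hr, correlation_toEuclideanLin]; exact (hxe t).2.2 i hi
  · rw [hr, correlation_toEuclideanLin, correlation_toEuclideanLin]
    exact hj (t + 1) le_add_self i
  · simpa [union_comm] using hΛ (t + 1) le_add_self

end Matrix

/-- Support recovery under noise: if `δ_{k+b+1} < 1/√(k−g+1)` and
`min_{i∈T\T₀}|x_i| > max{√(2(1+δ))ε/(1−√(k−g+1)δ), 2ε/√(1−δ)}`, then OMP with prior
support `T₀` and stopping rule `‖rᵗ‖₂ ≤ ε` selects exactly the indices of `T\T₀` in
exactly `k−g` iterations: all selected indices lie in `T\T₀`, `‖rᵗ‖₂ > ε` for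
`t < k−g` and `‖r^{k−g}‖₂ ≤ ε`. -/
theorem stmt11 (m n k g b : ℕ) (hg : g < k)
    (A : Matrix (Fin m) (Fin n) ℝ) (δ ε : ℝ) (hRIP : RIP A (k + b + 1) δ)
    (hδ : δ < 1 / Real.sqrt ((k : ℝ) - g + 1))
    (x : Fin n → ℝ) (v : Fin m → ℝ) (hv : Real.sqrt (∑ i, v i ^ 2) ≤ ε)
    (T T₀ : Finset (Fin n))
    (hT : ∀ i, x i ≠ 0 ↔ i ∈ T) (hTcard : T.card = k)
    (hcap : (T ∩ T₀).card = g) (hbcard : (T₀ \ T).card = b)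
    (hmin : ∀ i ∈ T \ T₀,
      max (Real.sqrt (2 * (1 + δ)) * ε / (1 - Real.sqrt ((k : ℝ) - g + 1) * δ))
        (2 * ε / Real.sqrt (1 - δ)) < |x i|)
    (y : Fin m → ℝ) (hy : y = A.mulVec x + v)
    (Λ : ℕ → Finset (Fin n)) (r : ℕ → Fin m → ℝ) (j : ℕ → Fin n)
    (xe : ℕ → Fin n → ℝ)
    (hΛ0 : Λ 0 = T₀)
    (hxe : ∀ t, (∀ i, i ∉ Λ t → xe t i = 0) ∧ r t = y - A.mulVec (xe t) ∧
      (∀ i ∈ Λ t, (∑ l, A l i * r t l) = 0))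
    (hj : ∀ t, 1 ≤ t → ∀ i, |∑ l, A l i * r (t - 1) l| ≤ |∑ l, A l (j t) * r (t - 1) l|)
    (hΛ : ∀ t, 1 ≤ t → Λ t = Λ (t - 1) ∪ {j t}) :
    (∀ t, 1 ≤ t → t ≤ k - g → j t ∈ T \ T₀) ∧
    (∀ t, t < k - g → ε < Real.sqrt (∑ i, r t i ^ 2)) ∧
    Real.sqrt (∑ i, r (k - g) i ^ 2) ≤ ε := by
  have hcard : #(T \ T₀) = k - g := by
    have := card_sdiff_add_card_inter T T₀
    omega
  have hN : ((#(T \ T₀) : ℕ) : ℝ) = k - g := by rw [hcard, Nat.cast_sub hg.le]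
  have hy' : WithLp.toLp 2 y = Matrix.toEuclideanLin A (WithLp.toLp 2 x) + WithLp.toLp 2 v := by
    rw [hy]; rfl
  have hres : ∀ t, WithLp.toLp 2 y - Matrix.toEuclideanLin A (WithLp.toLp 2 (xe t)) =
      WithLp.toLp 2 (r t) := fun t => by rw [(hxe t).2.1]; rfl
  have hOMP := isOMPTrace_toEuclideanLin hΛ0 hxe hj hΛ
  rw [hy'] at hOMP
  have hRIP' : ∀ i, RestrictedIsometryOn (Matrix.toEuclideanLin A)
      (supportedOn (insert i (T ∪ T₀))) δ := fun i =>
    hRIP.restrictedIsometryOn <| (card_insert_le _ _).trans <| by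
      rw [union_comm, ← card_sdiff_add_card]; omega
  have hδ' : √(#(T \ T₀) + 1) * δ < 1 := by
    rw [hN]
    exact (lt_div_iff₀' (sqrt_pos.2 (by linarith [(Nat.cast_lt (α := ℝ)).2 hg]))).1 hδ
  obtain ⟨hsel, hlarge, hsmall⟩ := hOMP.exact_recovery hRIP' hδ'
    (fun i hi => not_not.1 (mt (hT i).1 hi)) ((norm_toLp_eq_sqrt_sum_sq v).trans_le hv)
    (by simpa only [hN] using hmin)
  simp only [← hy', hres, norm_toLp_eq_sqrt_sum_sq, hcard] at hsel hlarge hsmall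
  exact ⟨hsel, hlarge, hsmall⟩
end

section
/- Under the conditions of the noisy support recovery theorem, with the additional assumption min_{i ∈ T} |x_i| > max{ √(2(1+δ)) ε/(1 − √(k−g+1) δ), 2ε/√(1−δ) } (δ = δ_{k+b+1}), the output x̂ of OMP_{T₀} satisfies min_{i ∈ T∩T₀} |x̂_i| > ε/√(1−δ), max_{i ∈ T₀\T} |x̂_i| ≤ ε/√(1−δ), and ‖x − x̂‖₂ ≤ ε/√(1−δ). -/
/-!
The residual `y - A x̂` is orthogonal to the columns indexed by `Λ = T ∪ T₀`, and the error
`u = x - x̂` is supported on `Λ`, so `Au ⟂ Au + v`. Pythagoras gives `‖Au‖ ≤ ‖v‖ ≤ ε`, and since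
`|Λ| ≤ k + b` the RIP lower bound turns this into `‖u‖ ≤ ε / √(1 - δ)`. The bound on `‖u‖`
bounds every coordinate of `u`, which is all the two support statements need, the first one
because `|x_i| > 2ε / √(1 - δ)` on `T`.
-/

open scoped BigOperators

open Finset Matrix

theorem sum_sq_le_of_sum_mul_add_eq_zero {ι : Type*} [Fintype ι] {w v : ι → ℝ}
    (h : ∑ i, w i * (w i + v i) = 0) : ∑ i, w i ^ 2 ≤ ∑ i, v i ^ 2 := by
  have hsplit : ∑ i, v i ^ 2
      = ∑ i, (w i + v i) ^ 2 + ∑ i, w i ^ 2 - 2 * ∑ i, w i * (w i + v i) := by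
    rw [mul_sum, ← sum_add_distrib, ← sum_sub_distrib]
    exact sum_congr rfl fun i _ => by ring
  rw [hsplit, h]
  linarith [sum_nonneg fun i (_ : i ∈ univ) => sq_nonneg (w i + v i)]

theorem sum_mulVec_mul_eq_zero_of_support {ι κ : Type*} [Fintype ι] [Fintype κ]
    (A : Matrix κ ι ℝ) (r : κ → ℝ) {u : ι → ℝ} {S : Finset ι}
    (hu : ∀ i ∉ S, u i = 0) (hr : ∀ i ∈ S, ∑ l, A l i * r l = 0) :
    ∑ l, (A *ᵥ u) l * r l = 0 := by
  have hswap : ∑ l, (A *ᵥ u) l * r l = ∑ i, u i * ∑ l, A l i * r l := by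
    simp only [mulVec, dotProduct, sum_mul, mul_sum]
    rw [sum_comm]
    exact sum_congr rfl fun i _ => sum_congr rfl fun l _ => by ring
  rw [hswap]
  refine sum_eq_zero fun i _ => ?_
  by_cases hi : i ∈ S
  · rw [hr i hi, mul_zero]
  · rw [hu i hi, zero_mul]

theorem RIP.one_sub_mul_sum_sq_sub_le {m n s : ℕ} {A : Matrix (Fin m) (Fin n) ℝ} {δ : ℝ}
    (hRIP : RIP A s δ) {S : Finset (Fin n)} (hS : S.card ≤ s) {x xh : Fin n → ℝ}
    (v : Fin m → ℝ) (hx : ∀ i ∉ S, x i = 0) (hxh : ∀ i ∉ S, xh i = 0)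
    (horth : ∀ i ∈ S, ∑ l, A l i * (A *ᵥ x + v - A *ᵥ xh) l = 0) :
    (1 - δ) * ∑ i, (x i - xh i) ^ 2 ≤ ∑ l, v l ^ 2 := by
  have hu : ∀ i ∉ S, (x - xh) i = 0 := fun i hi => by simp [hx i hi, hxh i hi]
  have hres : A *ᵥ x + v - A *ᵥ xh = A *ᵥ (x - xh) + v := by
    rw [mulVec_sub]; abel
  rw [hres] at horth
  calc (1 - δ) * ∑ i, (x i - xh i) ^ 2 ≤ ∑ l, (A *ᵥ (x - xh)) l ^ 2 :=
        (hRIP (x - xh) ⟨S, hS, hu⟩).1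
    _ ≤ ∑ l, v l ^ 2 :=
        sum_sq_le_of_sum_mul_add_eq_zero (sum_mulVec_mul_eq_zero_of_support A _ hu horth)

theorem Real.sqrt_le_div_sqrt_of_mul_le {a b c : ℝ} (hc : 0 < c) (h : c * a ≤ b) :
    √a ≤ √b / √c := by
  rw [le_div_iff₀ (Real.sqrt_pos.2 hc), ← Real.sqrt_mul' a hc.le, mul_comm]
  exact Real.sqrt_le_sqrt h

theorem abs_le_sqrt_sum_sq {ι : Type*} [Fintype ι] (u : ι → ℝ) (i : ι) :
    |u i| ≤ √(∑ j, u j ^ 2) :=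
  Real.abs_le_sqrt (single_le_sum (fun j _ => sq_nonneg (u j)) (mem_univ i))

theorem stmt12_general (m n k g b : ℕ) (hg : g < k)
    (A : Matrix (Fin m) (Fin n) ℝ) (δ ε : ℝ) (hRIP : RIP A (k + b + 1) δ)
    (hδ : δ < 1 / Real.sqrt ((k : ℝ) - g + 1))
    (x : Fin n → ℝ) (v : Fin m → ℝ) (hv : Real.sqrt (∑ i, v i ^ 2) ≤ ε)
    (T T₀ : Finset (Fin n))
    (hT : ∀ i, x i ≠ 0 ↔ i ∈ T) (hTcard : T.card = k)
    (hbcard : (T₀ \ T).card = b)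
    (hmin : ∀ i ∈ T,
      max (Real.sqrt (2 * (1 + δ)) * ε / (1 - Real.sqrt ((k : ℝ) - g + 1) * δ))
        (2 * ε / Real.sqrt (1 - δ)) < |x i|)
    (y : Fin m → ℝ) (hy : y = A.mulVec x + v)
    (xh : Fin n → ℝ) (hsupp : ∀ i ∉ T ∪ T₀, xh i = 0)
    (horth : ∀ i ∈ T ∪ T₀, (∑ l, A l i * (y - A.mulVec xh) l) = 0) :
    (∀ i ∈ T ∩ T₀, ε / Real.sqrt (1 - δ) < |xh i|) ∧
    (∀ i ∈ T₀ \ T, |xh i| ≤ ε / Real.sqrt (1 - δ)) ∧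
    Real.sqrt (∑ i, (x i - xh i) ^ 2) ≤ ε / Real.sqrt (1 - δ) := by
  subst hy
  have hδ1 : δ < 1 := by
    have hkg : (1 : ℝ) ≤ (k : ℝ) - g + 1 := by
      have : (g : ℝ) < k := by exact_mod_cast hg
      linarith
    refine hδ.trans_le ?_
    rw [div_le_one (Real.sqrt_pos.2 (by linarith))]
    exact Real.one_le_sqrt.2 hkg
  have hx : ∀ i ∉ T, x i = 0 := fun i hi => by_contra fun h => hi ((hT i).1 h)
  have hcard : (T ∪ T₀).card ≤ k + b + 1 := by
    rw [union_comm, ← card_sdiff_add_card, hTcard, hbcard]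
    omega
  have herr : √(∑ i, (x i - xh i) ^ 2) ≤ ε / √(1 - δ) :=
    (Real.sqrt_le_div_sqrt_of_mul_le (sub_pos.2 hδ1)
      (hRIP.one_sub_mul_sum_sq_sub_le hcard v (fun i hi => hx i (notMem_union.1 hi).1)
        hsupp horth)).trans (div_le_div_of_nonneg_right hv (Real.sqrt_nonneg _))
  have hcoord : ∀ i, |x i - xh i| ≤ ε / √(1 - δ) :=
    fun i => (abs_le_sqrt_sum_sq (fun j => x j - xh j) i).trans herr
  refine ⟨fun i hi => ?_, fun i hi => ?_, herr⟩
  · have hxi := (le_max_right _ _).trans_lt (hmin i (mem_inter.1 hi).1)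
    rw [mul_div_assoc] at hxi
    linarith [hcoord i, abs_sub_abs_le_abs_sub (x i) (xh i)]
  · simpa [hx i (mem_sdiff.1 hi).2] using hcoord i

/-- Under the conditions of the noisy support recovery theorem, with
`min_{i∈T}|x_i| > max{√(2(1+δ))ε/(1−√(k−g+1)δ), 2ε/√(1−δ)}`, the least-squares
output `x̂` of OMP on `Λ_{k−g} = T∪T₀` satisfies
`min_{i∈T∩T₀}|x̂_i| > ε/√(1−δ)`, `max_{i∈T₀\T}|x̂_i| ≤ ε/√(1−δ)` and
`‖x − x̂‖₂ ≤ ε/√(1−δ)`. -/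
theorem stmt12 (m n k g b : ℕ) (hg : g < k)
    (A : Matrix (Fin m) (Fin n) ℝ) (δ ε : ℝ) (hRIP : RIP A (k + b + 1) δ)
    (hδ : δ < 1 / Real.sqrt ((k : ℝ) - g + 1))
    (x : Fin n → ℝ) (v : Fin m → ℝ) (hv : Real.sqrt (∑ i, v i ^ 2) ≤ ε)
    (T T₀ : Finset (Fin n))
    (hT : ∀ i, x i ≠ 0 ↔ i ∈ T) (hTcard : T.card = k)
    (hcap : (T ∩ T₀).card = g) (hbcard : (T₀ \ T).card = b)
    (hmin : ∀ i ∈ T,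
      max (Real.sqrt (2 * (1 + δ)) * ε / (1 - Real.sqrt ((k : ℝ) - g + 1) * δ))
        (2 * ε / Real.sqrt (1 - δ)) < |x i|)
    (y : Fin m → ℝ) (hy : y = A.mulVec x + v)
    (xh : Fin n → ℝ) (hsupp : ∀ i ∉ T ∪ T₀, xh i = 0)
    (horth : ∀ i ∈ T ∪ T₀, (∑ l, A l i * (y - A.mulVec xh) l) = 0) :
    (∀ i ∈ T ∩ T₀, ε / Real.sqrt (1 - δ) < |xh i|) ∧
    (∀ i ∈ T₀ \ T, |xh i| ≤ ε / Real.sqrt (1 - δ)) ∧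
    Real.sqrt (∑ i, (x i - xh i) ^ 2) ≤ ε / Real.sqrt (1 - δ) :=
  stmt12_general m n k g b hg A δ ε hRIP hδ x v hv T T₀ hT hTcard hbcard hmin y hy xh hsupp horth
end

section
/- In the necessary-condition construction, the correlations of the initial residual r⁰ = A_{T\T₀}x_{T\T₀} + v satisfy ⟨Ae_i, r⁰⟩ = (1 − δ/√(k−g+1))·θ for all i ∈ T\T₀, and ⟨Ae_{k+b+1}, r⁰⟩ = −((k−g)/√(k−g+1))·δ·θ − √(1−δ)·ε; consequently, when θ = √(1−δ)ε/(1 − √(k−g+1)δ), the maximum correlation over T\T₀ equals the correlation at the wrong index k+b+1 in absolute value. -/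
/-!
Write `z = θ 𝟙_{T∖T₀}`, `w = (0, …, 0, -√(1-δ) ε)` and `u` for row `m = k-g` of `U`, the index
where `D` deviates from `√(1+δ) I`. Since `UᵀU = 1`, `Aᵀ v = UᵀDD⁻¹Uw = w`, and since
`D² = (1+δ) I - 2δ eₘeₘᵀ`, `AᵀA z = (1+δ) z - 2δ ⟨u, z⟩ u`. Thus the correlations are
`(1+δ) z - 2δ ⟨u, z⟩ u + w`, and with `u` equal to `1/√(K(η²+1))` on `T∖T₀` and to `η/√(η²+1)` at
`k+b+1`, everything reduces to `K(η²+1) = 2√(K+1)(√(K+1)-1)`, which follows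
from `η = (√(K+1)-1)/√K`.
-/

open Matrix

section Orthogonal

variable {n : Type*} [Fintype n] [DecidableEq n] {U : Matrix n n ℝ}

theorem transpose_mulVec_inv_mul_mulVec (hU : Uᵀ * U = 1) {D : Matrix n n ℝ} (hD : D.IsSymm)
    (hD' : IsUnit D) (w : n → ℝ) : (D * U)ᵀ *ᵥ ((D⁻¹ * U) *ᵥ w) = w := by
  rw [mulVec_mulVec, transpose_mul, hD.eq, mul_assoc, ← mul_assoc D,
    mul_nonsing_inv _ ((isUnit_iff_isUnit_det D).mp hD'), one_mul, hU, one_mulVec]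

theorem transpose_mulVec_mulVec_diagonal_ite_mul (hU : Uᵀ * U = 1) (m : n) (p q : ℝ)
    (z : n → ℝ) :
    (diagonal (fun j => if j = m then p else q) * U)ᵀ *ᵥ
        ((diagonal (fun j => if j = m then p else q) * U) *ᵥ z) =
      q ^ 2 • z + ((p ^ 2 - q ^ 2) * (U *ᵥ z) m) • U m := by
  have hDD : ∀ y : n → ℝ, diagonal (fun j => if j = m then p else q) *ᵥ
      (diagonal (fun j => if j = m then p else q) *ᵥ y) =
        q ^ 2 • y + ((p ^ 2 - q ^ 2) * y m) • Pi.single m 1 := by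
    intro y
    ext j
    simp only [mulVec_diagonal, Pi.add_apply, Pi.smul_apply, smul_eq_mul, Pi.single_apply]
    split_ifs with hj
    · rw [hj]; ring
    · ring
  rw [transpose_mul, (isSymm_diagonal _).eq, ← mulVec_mulVec, ← mulVec_mulVec, hDD,
    mulVec_add, mulVec_smul, mulVec_mulVec, hU, one_mulVec, mulVec_smul, mulVec_single_one]
  rfl

theorem transpose_mulVec_residual_eq (hU : Uᵀ * U = 1) {m : n} {p q : ℝ} (hp : p ≠ 0)
    (hq : q ≠ 0) {D : Matrix n n ℝ} (hD : D = diagonal fun j => if j = m then p else q)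
    (z w : n → ℝ) :
    (D * U)ᵀ *ᵥ ((D * U) *ᵥ z + (D⁻¹ * U) *ᵥ w) =
      q ^ 2 • z + ((p ^ 2 - q ^ 2) * (U *ᵥ z) m) • U m + w := by
  have hDunit : IsUnit D := by
    refine hD ▸ isUnit_diagonal.mpr (Pi.isUnit_iff.mpr fun j => ?_)
    split_ifs
    exacts [hp.isUnit, hq.isUnit]
  rw [mulVec_add, transpose_mulVec_inv_mul_mulVec hU (hD ▸ isSymm_diagonal _) hDunit, hD,
    transpose_mulVec_mulVec_diagonal_ite_mul hU]

theorem transpose_mulVec_residual_eq_of_sqrt (hU : Uᵀ * U = 1) {m : n} {δ : ℝ} (hδ0 : -1 < δ)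
    (hδ1 : δ < 1) {D : Matrix n n ℝ}
    (hD : D = diagonal fun j => if j = m then √(1 - δ) else √(1 + δ)) (z w : n → ℝ) :
    (D * U)ᵀ *ᵥ ((D * U) *ᵥ z + (D⁻¹ * U) *ᵥ w) =
      (1 + δ) • z + (-(2 * δ) * (U *ᵥ z) m) • U m + w := by
  rw [transpose_mulVec_residual_eq hU (Real.sqrt_ne_zero'.mpr (by linarith))
    (Real.sqrt_ne_zero'.mpr (by linarith)) hD, Real.sq_sqrt (by linarith),
    Real.sq_sqrt (by linarith)]
  ring_nf

end Orthogonal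

theorem Fin.sum_mul_ite_val_lt {N K : ℕ} (h : K ≤ N) {u : Fin N → ℝ} {α : ℝ}
    (hu : ∀ i : Fin N, (i : ℕ) < K → u i = α) (θ : ℝ) :
    ∑ i : Fin N, u i * (if (i : ℕ) < K then θ else 0) = K * (α * θ) := by
  simp only [mul_ite, mul_zero]
  rw [Finset.sum_ite, Finset.sum_const_zero, add_zero,
    Finset.sum_congr rfl fun i hi => by rw [hu i (Finset.mem_filter.mp hi).2], Finset.sum_const,
    Fin.card_filter_val_lt, min_eq_right h, nsmul_eq_mul]

section Eta

variable {K η : ℝ}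

theorem eta_sq_add_one (hK : 0 < K) (hη : η = (√(K + 1) - 1) / √K) :
    η ^ 2 + 1 = 2 * √(K + 1) * (√(K + 1) - 1) / K := by
  have hs : √(K + 1) ^ 2 = K + 1 := Real.sq_sqrt (by linarith)
  rw [hη, div_pow, Real.sq_sqrt hK.le]
  field_simp
  linear_combination -hs

theorem two_mul_mul_one_div_sqrt_sq (hK : 0 < K) (hη : η = (√(K + 1) - 1) / √K) :
    2 * K * (1 / √(K * (η ^ 2 + 1))) ^ 2 = 1 + 1 / √(K + 1) := by
  have hs : √(K + 1) ^ 2 = K + 1 := Real.sq_sqrt (by linarith)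
  have hs1 : 1 < √(K + 1) := by rw [Real.lt_sqrt zero_le_one]; linarith
  have hs0 : √(K + 1) - 1 ≠ 0 := by linarith
  rw [div_pow, Real.sq_sqrt (by positivity), eta_sq_add_one hK hη]
  field_simp
  linear_combination -hs

theorem two_mul_one_div_sqrt_mul_div_sqrt (hK : 0 < K) (hη : η = (√(K + 1) - 1) / √K) :
    2 * (1 / √(K * (η ^ 2 + 1))) * (η / √(η ^ 2 + 1)) = 1 / √(K + 1) := by
  have hs1 : 1 < √(K + 1) := by rw [Real.lt_sqrt zero_le_one]; linarith
  have hq : √(η ^ 2 + 1) ^ 2 = η ^ 2 + 1 := Real.sq_sqrt (by positivity)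
  have hq0 : 0 < √(η ^ 2 + 1) := Real.sqrt_pos.mpr (by positivity)
  have hs0 : √(K + 1) - 1 ≠ 0 := by linarith
  rw [Real.sqrt_mul hK.le]
  field_simp
  rw [hq, eta_sq_add_one hK hη, hη]
  field_simp
  exact (Real.sq_sqrt hK.le).symm

end Eta

theorem abs_one_sub_div_mul_eq_abs {K s δ θ c : ℝ} (hs : s ^ 2 = K + 1) (hs0 : 0 < s)
    (hδ : δ < 1 / s) (hθ : θ = c / (1 - s * δ)) :
    |(1 - δ / s) * θ| = |-(K / s * δ * θ) - c| := by
  have hsδ : 1 - s * δ ≠ 0 := by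
    rw [lt_div_iff₀ hs0] at hδ
    linarith
  have hc : c = θ * (1 - s * δ) := by rw [hθ, div_mul_cancel₀ _ hsδ]
  rw [← abs_neg, hc]
  congr 1
  field_simp
  linear_combination -δ * θ * hs

theorem stmt16_general (k g b K : ℕ) (hg : g < k) (hK : K = k - g)
    (δ ε θ η : ℝ) (hδ0 : 0 ≤ δ) (hδ : δ < 1 / Real.sqrt ((K : ℝ) + 1))
    (hη : η = (Real.sqrt ((K : ℝ) + 1) - 1) / Real.sqrt (K : ℝ))
    (ξ : ℕ → ℕ → ℝ)
    (U : Matrix (Fin (k + b + 1)) (Fin (k + b + 1)) ℝ)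
    (hU : ∀ i j : Fin (k + b + 1), U.transpose i j =
      if (j : ℕ) < K - 1 then (if (i : ℕ) < K then ξ (j : ℕ) (i : ℕ) else 0)
      else if (j : ℕ) = K - 1 then
        (if (i : ℕ) < K then 1 / Real.sqrt ((K : ℝ) * (η ^ 2 + 1))
         else if (i : ℕ) = k + b then η / Real.sqrt (η ^ 2 + 1) else 0)
      else if (j : ℕ) < k + b then (if (i : ℕ) = (j : ℕ) then 1 else 0)
      else
        (if (i : ℕ) < K then η / Real.sqrt ((K : ℝ) * (η ^ 2 + 1))
         else if (i : ℕ) = k + b then -(1 / Real.sqrt (η ^ 2 + 1)) else 0))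
    (hUortho : U.transpose * U = 1)
    (D : Matrix (Fin (k + b + 1)) (Fin (k + b + 1)) ℝ)
    (hD : D = Matrix.diagonal fun i : Fin (k + b + 1) =>
      if (i : ℕ) = K - 1 then Real.sqrt (1 - δ) else Real.sqrt (1 + δ))
    (A : Matrix (Fin (k + b + 1)) (Fin (k + b + 1)) ℝ) (hA : A = D * U)
    (v : Fin (k + b + 1) → ℝ)
    (hv : v = (D⁻¹ * U).mulVec fun i : Fin (k + b + 1) =>
      if (i : ℕ) = k + b then -(Real.sqrt (1 - δ) * ε) else 0)
    (r0 : Fin (k + b + 1) → ℝ)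
    (hr0 : r0 = A.mulVec (fun i => if (i : ℕ) < K then θ else 0) + v) :
    (∀ i : Fin (k + b + 1), (i : ℕ) < K →
      (∑ l, A l i * r0 l) = (1 - δ / Real.sqrt ((K : ℝ) + 1)) * θ) ∧
    (∀ i : Fin (k + b + 1), (i : ℕ) = k + b →
      (∑ l, A l i * r0 l) =
        -(((K : ℝ) / Real.sqrt ((K : ℝ) + 1)) * δ * θ) - Real.sqrt (1 - δ) * ε) ∧
    (θ = Real.sqrt (1 - δ) * ε / (1 - Real.sqrt ((K : ℝ) + 1) * δ) →
      ∀ i i' : Fin (k + b + 1), (i : ℕ) < K → (i' : ℕ) = k + b →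
        |∑ l, A l i * r0 l| = |∑ l, A l i' * r0 l|) := by
  have hKpos : (0 : ℝ) < K := by norm_cast; omega
  have hδ1 : δ < 1 := hδ.trans_le (div_le_one_of_le₀ (Real.one_le_sqrt.mpr (by linarith))
    (Real.sqrt_nonneg _))
  set m : Fin (k + b + 1) := ⟨K - 1, by omega⟩
  set α := 1 / √((K : ℝ) * (η ^ 2 + 1))
  set β := η / √(η ^ 2 + 1)
  set z : Fin (k + b + 1) → ℝ := fun i => if (i : ℕ) < K then θ else 0
  set w : Fin (k + b + 1) → ℝ := fun i => if (i : ℕ) = k + b then -(√(1 - δ) * ε) else 0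
  have hrow : ∀ i, U m i = if (i : ℕ) < K then α else if (i : ℕ) = k + b then β else 0 := by
    intro i
    rw [← transpose_apply U, hU, if_neg (by simp [m]), if_pos rfl]
  have hUz : (U *ᵥ z) m = K * (α * θ) :=
    Fin.sum_mul_ite_val_lt (by omega) (fun i hi => by rw [hrow, if_pos hi]) θ
  have hcorr : ∀ i, ∑ l, A l i * r0 l = (1 + δ) * z i - 2 * δ * (U *ᵥ z) m * U m i + w i := by
    intro i
    have hDm : D = diagonal fun j => if j = m then √(1 - δ) else √(1 + δ) := by
      simp only [hD, m, Fin.ext_iff]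
    have := congrFun (transpose_mulVec_residual_eq_of_sqrt hUortho (by linarith) hδ1 hDm z w) i
    rw [← hA, ← hv, ← hr0] at this
    change (Aᵀ *ᵥ r0) i = _
    simpa only [sub_eq_add_neg, neg_mul, neg_smul, Pi.add_apply, Pi.smul_apply, smul_eq_mul,
      Pi.neg_apply] using this
  have h₁ : ∀ i : Fin (k + b + 1), (i : ℕ) < K →
      ∑ l, A l i * r0 l = (1 - δ / √((K : ℝ) + 1)) * θ := by
    intro i hi
    have hα : 2 * K * α ^ 2 = 1 + 1 / √((K : ℝ) + 1) := two_mul_mul_one_div_sqrt_sq hKpos hη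
    rw [hcorr, hUz, hrow, show z i = θ from if_pos hi, if_pos hi,
      show w i = 0 from if_neg (by omega)]
    linear_combination -δ * θ * hα
  have h₂ : ∀ i : Fin (k + b + 1), (i : ℕ) = k + b →
      ∑ l, A l i * r0 l = -((K : ℝ) / √((K : ℝ) + 1) * δ * θ) - √(1 - δ) * ε := by
    intro i hi
    have hαβ : 2 * α * β = 1 / √((K : ℝ) + 1) := two_mul_one_div_sqrt_mul_div_sqrt hKpos hη
    rw [hcorr, hUz, hrow, show z i = 0 from if_neg (by omega), if_neg (by omega), if_pos hi,
      show w i = _ from if_pos hi]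
    linear_combination -δ * K * θ * hαβ
  refine ⟨h₁, h₂, fun hθ i i' hi hi' => ?_⟩
  rw [h₁ i hi, h₂ i' hi']
  exact abs_one_sub_div_mul_eq_abs (Real.sq_sqrt (by positivity)) (by positivity) hδ hθ

/-- Correlations for the necessary-condition construction: with `A = DU` as in the paper,
`x` equal to `θ` on `T\T₀ = {1,…,k−g}` and `1` on `T∩T₀`, noise
`v = D⁻¹U(0,…,0,−√(1−δ)ε)ᵀ` and initial residual `r⁰ = A_{T\T₀}x_{T\T₀} + v`, one has
`⟨Ae_i, r⁰⟩ = (1 − δ/√(k−g+1))θ` for `i ∈ T\T₀` and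
`⟨Ae_{k+b+1}, r⁰⟩ = −((k−g)/√(k−g+1))δθ − √(1−δ)ε`; when
`θ = √(1−δ)ε/(1−√(k−g+1)δ)`, the two correlations agree in absolute value. -/
theorem stmt16 (k g b K : ℕ) (hg : g < k) (hK : K = k - g)
    (δ ε θ η : ℝ) (hδ0 : 0 ≤ δ) (hδ : δ < 1 / Real.sqrt ((K : ℝ) + 1)) (hε : 0 < ε)
    (hη : η = (Real.sqrt ((K : ℝ) + 1) - 1) / Real.sqrt (K : ℝ))
    (ξ : ℕ → ℕ → ℝ)
    (hξortho : ∀ j1 j2, j1 < K - 1 → j2 < K - 1 →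
      (∑ i ∈ Finset.range K, ξ j1 i * ξ j2 i) = if j1 = j2 then 1 else 0)
    (hξone : ∀ j, j < K - 1 → (∑ i ∈ Finset.range K, ξ j i) = 0)
    (U : Matrix (Fin (k + b + 1)) (Fin (k + b + 1)) ℝ)
    (hU : ∀ i j : Fin (k + b + 1), U.transpose i j =
      if (j : ℕ) < K - 1 then (if (i : ℕ) < K then ξ (j : ℕ) (i : ℕ) else 0)
      else if (j : ℕ) = K - 1 then
        (if (i : ℕ) < K then 1 / Real.sqrt ((K : ℝ) * (η ^ 2 + 1))
         else if (i : ℕ) = k + b then η / Real.sqrt (η ^ 2 + 1) else 0)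
      else if (j : ℕ) < k + b then (if (i : ℕ) = (j : ℕ) then 1 else 0)
      else
        (if (i : ℕ) < K then η / Real.sqrt ((K : ℝ) * (η ^ 2 + 1))
         else if (i : ℕ) = k + b then -(1 / Real.sqrt (η ^ 2 + 1)) else 0))
    (hUortho : U.transpose * U = 1)
    (D : Matrix (Fin (k + b + 1)) (Fin (k + b + 1)) ℝ)
    (hD : D = Matrix.diagonal fun i : Fin (k + b + 1) =>
      if (i : ℕ) = K - 1 then Real.sqrt (1 - δ) else Real.sqrt (1 + δ))
    (A : Matrix (Fin (k + b + 1)) (Fin (k + b + 1)) ℝ) (hA : A = D * U)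
    (x : Fin (k + b + 1) → ℝ)
    (hx : ∀ i, x i = if (i : ℕ) < K then θ else if (i : ℕ) < k then 1 else 0)
    (v : Fin (k + b + 1) → ℝ)
    (hv : v = (D⁻¹ * U).mulVec fun i : Fin (k + b + 1) =>
      if (i : ℕ) = k + b then -(Real.sqrt (1 - δ) * ε) else 0)
    (r0 : Fin (k + b + 1) → ℝ)
    (hr0 : r0 = A.mulVec (fun i => if (i : ℕ) < K then θ else 0) + v) :
    (∀ i : Fin (k + b + 1), (i : ℕ) < K →
      (∑ l, A l i * r0 l) = (1 - δ / Real.sqrt ((K : ℝ) + 1)) * θ) ∧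
    (∀ i : Fin (k + b + 1), (i : ℕ) = k + b →
      (∑ l, A l i * r0 l) =
        -(((K : ℝ) / Real.sqrt ((K : ℝ) + 1)) * δ * θ) - Real.sqrt (1 - δ) * ε) ∧
    (θ = Real.sqrt (1 - δ) * ε / (1 - Real.sqrt ((K : ℝ) + 1) * δ) →
      ∀ i i' : Fin (k + b + 1), (i : ℕ) < K → (i' : ℕ) = k + b →
        |∑ l, A l i * r0 l| = |∑ l, A l i' * r0 l|) :=
  stmt16_general k g b K hg hK δ ε θ η hδ0 hδ hη ξ U hU hUortho D hD A hA v hv r0 hr0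
end
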